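/- arXiv:1606.03500 — 4 statements merged into one kernel-verified Lean document; each statement's English description precedes it below -/
import Mathlib

section
/- Let λ > 0 and define for x, y, z > 0 the function D(x,y,z) := c_λ 2^{2λ−2} (xyz)^{−2λ+1} [Δ(x,y,z)]^{2λ−2} when a triangle with side lengths x, y, z exists (Δ being its area) and D(x,y,z) := 0 otherwise, where c_λ := Γ(λ+1/2)/(Γ(λ)√π). Then for all x, z > 0, ∫₀^∞ D(x,y,z) y^{2λ} dy = 1. -/
noncomputable section
open MeasureTheory Set

/-- The constant `c_λ = Γ(λ+1/2)/(Γ(λ)√π)`. -/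
def cLam (lam : ℝ) : ℝ := Real.Gamma (lam + 1 / 2) / (Real.Gamma lam * Real.sqrt Real.pi)

/-- Area of the Euclidean triangle with side lengths `x, y, z` (Heron's formula);
meaningful when the triangle inequalities hold. -/
def triArea (x y z : ℝ) : ℝ :=
  Real.sqrt (((x + y + z) / 2) * ((x + y + z) / 2 - x) * ((x + y + z) / 2 - y)
    * ((x + y + z) / 2 - z))

/-- The Hankel convolution kernel `D(x,y,z)`. -/
def DKer (lam x y z : ℝ) : ℝ :=
  if x < y + z ∧ y < x + z ∧ z < x + y then
    cLam lam * (2 : ℝ) ^ (2 * lam - 2) * (x * y * z) ^ (1 - 2 * lam)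
      * (triArea x y z) ^ (2 * lam - 2)
  else 0

/-!
Substitute `t = (x² + z² - y²) / (2xz)`, the cosine of the angle between the sides `x` and `z`
(law of cosines). Then `y dy = -xz dt`, and Heron's formula gives `1 - t² = (2Δ / xz)²`, so
`D(x,y,z) y^{2λ} dy` becomes `c_λ (1 - t²)^{λ-1} dt` on `(-1, 1)`. Via `t = 2u - 1` the last
integral is `2^{2λ-1} B(λ, λ)`, which the duplication formula for `Γ` identifies with `1 / c_λ`.
-/

open Real

theorem integral_rpow_mul_one_sub_rpow {a b : ℝ} (ha : 0 < a) (hb : 0 < b) :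
    ∫ u in (0 : ℝ)..1, u ^ (a - 1) * (1 - u) ^ (b - 1) = Gamma a * Gamma b / Gamma (a + b) := by
  have key := Complex.betaIntegral_eq_Gamma_mul_div a b (by simpa) (by simpa)
  rw [← Complex.ofReal_add, Complex.Gamma_ofReal, Complex.Gamma_ofReal, Complex.Gamma_ofReal,
    Complex.betaIntegral] at key
  apply Complex.ofReal_injective
  rw [← intervalIntegral.integral_ofReal]
  push_cast
  rw [← key]
  refine intervalIntegral.integral_congr fun u hu => ?_
  rw [uIcc_of_le zero_le_one] at hu
  push_cast [Complex.ofReal_cpow hu.1, Complex.ofReal_cpow (sub_nonneg.2 hu.2)]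
  rfl

theorem integral_one_sub_sq_rpow {a : ℝ} (ha : 0 < a) :
    ∫ t in (-1 : ℝ)..1, (1 - t ^ 2) ^ (a - 1)
      = 2 ^ (2 * a - 1) * (Gamma a * Gamma a / Gamma (2 * a)) := by
  have hpt : ∀ u ∈ uIcc (0 : ℝ) 1, (1 - (2 * u - 1) ^ 2) ^ (a - 1)
      = 4 ^ (a - 1) * (u ^ (a - 1) * (1 - u) ^ (a - 1)) := by
    intro u hu
    rw [uIcc_of_le zero_le_one] at hu
    rw [show 1 - (2 * u - 1) ^ 2 = 4 * u * (1 - u) by ring,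
      mul_rpow (by linarith [hu.1]) (sub_nonneg.2 hu.2), mul_rpow (by norm_num) hu.1, mul_assoc]
  have h4 : (4 : ℝ) ^ (a - 1) = 2 ^ (2 * a - 1) / 2 := by
    rw [show (4 : ℝ) = 2 ^ (2 : ℝ) by norm_num, ← rpow_mul zero_le_two,
      show 2 * (a - 1) = (2 * a - 1) - 1 by ring, rpow_sub two_pos, rpow_one]
  have hsubst := intervalIntegral.integral_comp_mul_sub (fun t : ℝ => (1 - t ^ 2) ^ (a - 1))
    (a := 0) (b := 1) two_ne_zero 1
  norm_num only at hsubst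
  rw [intervalIntegral.integral_congr hpt, intervalIntegral.integral_const_mul, h4,
    integral_rpow_mul_one_sub_rpow ha ha, ← two_mul] at hsubst
  linear_combination -2 * hsubst

theorem cLam_mul_integral_one_sub_sq_rpow {lam : ℝ} (hlam : 0 < lam) :
    cLam lam * ∫ t in Ioo (-1 : ℝ) 1, (1 - t ^ 2) ^ (lam - 1) = 1 := by
  rw [← integral_Ioc_eq_integral_Ioo, ← intervalIntegral.integral_of_le (by norm_num),
    integral_one_sub_sq_rpow hlam, cLam]
  have hdup := Gamma_mul_Gamma_add_half_of_pos hlam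
  have h2 : (2 : ℝ) ^ (2 * lam - 1) * 2 ^ (1 - 2 * lam) = 1 := by
    rw [← rpow_add two_pos]; norm_num
  have := Gamma_pos_of_pos hlam
  have := Gamma_pos_of_pos (by linarith : 0 < 2 * lam)
  generalize Gamma (lam + 1 / 2) = G at hdup ⊢
  field_simp
  linear_combination (2:ℝ) ^ (2 * lam - 1) * hdup + Gamma (2 * lam) * √π * h2

def triCos (x y z : ℝ) : ℝ := (x ^ 2 + z ^ 2 - y ^ 2) / (2 * (x * z))

section Triangle

variable {x y z : ℝ}

theorem triangle_iff_mem_Ioo :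
    (x < y + z ∧ y < x + z ∧ z < x + y) ↔ y ∈ Ioo |x - z| (x + z) := by
  rw [mem_Ioo, abs_sub_lt_iff]
  constructor
  · rintro ⟨h₁, h₂, h₃⟩
    exact ⟨⟨by linarith, by linarith⟩, h₂⟩
  · rintro ⟨⟨h₁, h₂⟩, h₃⟩
    exact ⟨by linarith, h₃, by linarith⟩

theorem heron_pos (h : x < y + z ∧ y < x + z ∧ z < x + y) :
    0 < (x + y + z) / 2 * ((x + y + z) / 2 - x) * ((x + y + z) / 2 - y)
      * ((x + y + z) / 2 - z) := by
  obtain ⟨h₁, h₂, h₃⟩ := h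
  refine mul_pos (mul_pos (mul_pos ?_ ?_) ?_) ?_ <;> linarith

theorem triArea_sq (h : x < y + z ∧ y < x + z ∧ z < x + y) :
    triArea x y z ^ 2 = (x + y + z) / 2 * ((x + y + z) / 2 - x) * ((x + y + z) / 2 - y)
      * ((x + y + z) / 2 - z) :=
  sq_sqrt (heron_pos h).le

theorem triArea_pos (h : x < y + z ∧ y < x + z ∧ z < x + y) :
    0 < triArea x y z :=
  sqrt_pos.2 (heron_pos h)

theorem one_sub_triCos_sq (hx : x ≠ 0) (hz : z ≠ 0)
    (h : x < y + z ∧ y < x + z ∧ z < x + y) :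
    1 - triCos x y z ^ 2 = 4 * triArea x y z ^ 2 / (x * z) ^ 2 := by
  rw [triArea_sq h, triCos]
  field_simp
  ring

theorem hasDerivAt_triCos :
    HasDerivAt (fun w => triCos x w z) (-(y / (x * z))) y := by
  refine (((hasDerivAt_pow 2 y).const_sub (x ^ 2 + z ^ 2)).div_const (2 * (x * z))).congr_deriv ?_
  push_cast
  rw [neg_div, mul_div_mul_left _ _ two_ne_zero, pow_one]

theorem injOn_triCos (hx : x ≠ 0) (hz : z ≠ 0) :
    InjOn (fun w => triCos x w z) (Ioi 0) := by
  intro y₁ hy₁ y₂ hy₂ heq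
  simp only [triCos] at heq
  rw [div_left_inj' (by positivity)] at heq
  exact (sq_eq_sq₀ (le_of_lt hy₁) (le_of_lt hy₂)).1 (by linarith)

theorem triCos_image_Ioo (hx : 0 < x) (hz : 0 < z) :
    (fun w => triCos x w z) '' Ioo |x - z| (x + z) = Ioo (-1) 1 := by
  refine Subset.antisymm ?_ fun t ht => ?_
  · rintro _ ⟨y, hy, rfl⟩
    have h := triangle_iff_mem_Ioo.2 hy
    have hA := triArea_pos h
    have hsin : 0 < 1 - triCos x y z ^ 2 := by
      rw [one_sub_triCos_sq hx.ne' hz.ne' h]; positivity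
    rw [mem_Ioo, ← abs_lt, ← sq_lt_one_iff_abs_lt_one]
    linarith
  · obtain ⟨ht₁, ht₂⟩ := ht
    have hq₁ : (x - z) ^ 2 < x ^ 2 + z ^ 2 - 2 * (x * z) * t := by nlinarith [mul_pos hx hz]
    have hq₂ : x ^ 2 + z ^ 2 - 2 * (x * z) * t < (x + z) ^ 2 := by nlinarith [mul_pos hx hz]
    refine ⟨√(x ^ 2 + z ^ 2 - 2 * (x * z) * t), ⟨?_, ?_⟩, ?_⟩
    · rw [← sqrt_sq_eq_abs]
      exact sqrt_lt_sqrt (sq_nonneg _) hq₁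
    · rw [← sqrt_sq (by positivity : 0 ≤ x + z)]
      exact sqrt_lt_sqrt (hq₁.le.trans' (sq_nonneg _)) hq₂
    · beta_reduce
      rw [triCos, sq_sqrt (hq₁.le.trans' (sq_nonneg _))]
      field_simp
      ring

theorem DKer_mul_rpow_eq {lam : ℝ} (hx : 0 < x) (hz : 0 < z)
    (hy : y ∈ Ioo |x - z| (x + z)) :
    DKer lam x y z * y ^ (2 * lam)
      = y / (x * z) * (cLam lam * (1 - triCos x y z ^ 2) ^ (lam - 1)) := by
  have h := triangle_iff_mem_Ioo.2 hy
  have hy₀ : 0 < y := (abs_nonneg _).trans_lt hy.1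
  have hA := triArea_pos h
  have hsq : 4 * triArea x y z ^ 2 / (x * z) ^ 2 = (2 * triArea x y z / (x * z)) ^ (2 : ℝ) := by
    rw [rpow_two]; ring
  rw [DKer, if_pos h, one_sub_triCos_sq hx.ne' hz.ne' h, hsq, ← rpow_mul (by positivity),
    show 2 * (lam - 1) = 2 * lam - 2 by ring, div_rpow (by positivity) (by positivity),
    mul_rpow zero_le_two hA.le, mul_rpow (by positivity) hz.le, mul_rpow hx.le hy₀.le]
  -- every power is now `X ^ (2 * lam - c)`; splitting off `X ^ (2 * lam)` leaves a rational identity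
  simp only [rpow_sub two_pos, rpow_sub hA, rpow_sub hx, rpow_sub hy₀, rpow_sub hz,
    mul_rpow hx.le hz.le, rpow_one, rpow_two]
  field_simp

end Triangle

/-- For all `x, z > 0`, `∫₀^∞ D(x,y,z) y^{2λ} dy = 1`. -/
theorem stmt5 (lam : ℝ) (hlam : 0 < lam) :
    ∀ x z : ℝ, 0 < x → 0 < z →
      ∫ y in Ioi (0 : ℝ), DKer lam x y z * y ^ (2 * lam) = 1 := by
  intro x z hx hz
  have hpos : Ioo |x - z| (x + z) ⊆ Ioi 0 := fun y hy => (abs_nonneg _).trans_lt hy.1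
  have hsubst := integral_image_eq_integral_abs_deriv_smul measurableSet_Ioo
    (fun _ _ => hasDerivAt_triCos.hasDerivWithinAt) ((injOn_triCos hx.ne' hz.ne').mono hpos)
    (fun t => cLam lam * (1 - t ^ 2) ^ (lam - 1))
  rw [triCos_image_Ioo hx hz] at hsubst
  calc ∫ y in Ioi 0, DKer lam x y z * y ^ (2 * lam)
      = ∫ y in Ioo |x - z| (x + z), DKer lam x y z * y ^ (2 * lam) :=
        setIntegral_eq_of_subset_of_forall_sdiff_eq_zero measurableSet_Ioi hpos fun y hy => by
          rw [DKer, if_neg (mt triangle_iff_mem_Ioo.1 hy.2), zero_mul]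
    _ = ∫ t in Ioo (-1) 1, cLam lam * (1 - t ^ 2) ^ (lam - 1) := by
        rw [hsubst]
        refine setIntegral_congr_fun measurableSet_Ioo fun y hy => ?_
        rw [DKer_mul_rpow_eq hx hz hy, smul_eq_mul, abs_neg,
          abs_of_pos (div_pos (hpos hy) (mul_pos hx hz))]
    _ = 1 := by rw [integral_const_mul, cLam_mul_integral_one_sub_sq_rpow hlam]
end
end

section
/- Let λ > 0, let φ ∈ C_c^∞(ℝ₊) with φ ≥ 0, supp φ ⊂ (0,1), and ∫₀^∞ φ(x) x^{2λ} dx = 1, and define ψ(t,x,y) := −t^{−1} x^{−2λ} ∫₀^∞ ∫₀^x D(w,y,z) ∂_z[(z/t)^{2λ+1} φ(z/t)] w^{2λ} dw dz. Then ψ(t,x,y) = 0 whenever |x − y| ≥ t. -/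
noncomputable section
open MeasureTheory Set

/-- The kernel
`ψ(t,x,y) = −t⁻¹ x^{−2λ} ∫₀^∞ ∫₀^x D(w,y,z) ∂_z[(z/t)^{2λ+1} φ(z/t)] w^{2λ} dw dz`. -/
def psiKer (lam : ℝ) (φ : ℝ → ℝ) (t x y : ℝ) : ℝ :=
  -(t⁻¹ * x ^ (-(2 * lam))) * ∫ z in Ioi (0 : ℝ), ∫ w in Ioo (0 : ℝ) x,
    DKer lam w y z * deriv (fun z' => (z' / t) ^ (2 * lam + 1) * φ (z' / t)) z * w ^ (2 * lam)

set_option maxHeartbeats 1000000 in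
lemma key_integral (lam : ℝ) {x y z : ℝ} (hy : 0 < y) (hz : 0 < z) (hx : y + z < x) :
    ∫ w in Ioo (0:ℝ) x, DKer lam w y z * w ^ (2*lam)
      = ∫ s in Ioo (0:ℝ) 1, cLam lam * (2:ℝ)^(2*lam-1) * (s*(1-s))^(lam-1) := by
  have hyz : 0 < y * z := mul_pos hy hz
  set f : ℝ → ℝ := fun s => Real.sqrt ((y-z)^2 + 4*y*z*s) with hf
  have hu : ∀ s ∈ Ioo (0:ℝ) 1, (0:ℝ) < (y-z)^2 + 4*y*z*s := by
    intro s hs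
    nlinarith [sq_nonneg (y-z), hs.1]
  -- image of the map
  have himg : f '' Ioo (0:ℝ) 1 = Ioo |y-z| (y+z) := by
    ext w
    constructor
    · rintro ⟨s, hs, rfl⟩
      have h1 : (y-z)^2 < (y-z)^2 + 4*y*z*s := by nlinarith [hs.1]
      have h2 : (y-z)^2 + 4*y*z*s < (y+z)^2 := by nlinarith [hs.2]
      constructor
      · have := Real.sqrt_lt_sqrt (sq_nonneg (y-z)) h1
        rwa [Real.sqrt_sq_eq_abs] at this
      · have := Real.sqrt_lt_sqrt (hu s hs).le h2
        rwa [Real.sqrt_sq (by positivity : (0:ℝ) ≤ y+z)] at this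
    · rintro ⟨h1, h2⟩
      have hw0 : 0 < w := lt_of_le_of_lt (abs_nonneg _) h1
      have hsq1 : (y-z)^2 < w^2 := by
        have : |y-z|^2 < w^2 := by
          apply pow_lt_pow_left₀ h1 (abs_nonneg _)
          norm_num
        rwa [sq_abs] at this
      have hsq2 : w^2 < (y+z)^2 := by nlinarith
      refine ⟨(w^2 - (y-z)^2)/(4*y*z), ⟨by apply div_pos <;> nlinarith, ?_⟩, ?_⟩
      · rw [div_lt_one (by positivity)]
        nlinarith
      · show Real.sqrt ((y-z)^2 + 4*y*z*((w^2 - (y-z)^2)/(4*y*z))) = w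
        have e : (y-z)^2 + 4*y*z*((w^2 - (y-z)^2)/(4*y*z)) = w^2 := by
          field_simp
          ring
        rw [e, Real.sqrt_sq hw0.le]
  have step1 : (∫ w in Ioo (0:ℝ) x, DKer lam w y z * w ^ (2*lam))
      = ∫ w in Ioo |y-z| (y+z), DKer lam w y z * w ^ (2*lam) := by
    refine (setIntegral_eq_of_subset_of_forall_diff_eq_zero measurableSet_Ioo ?_ ?_)
    · exact fun w hw => ⟨lt_of_le_of_lt (abs_nonneg _) hw.1, lt_trans hw.2 hx⟩
    · intro w hw
      have hw1 := hw.1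
      have hw2 := hw.2
      have hne : ¬ (w < y + z ∧ y < w + z ∧ z < w + y) := by
        intro ⟨c1, c2, c3⟩
        exact hw2 ⟨abs_sub_lt_iff.mpr ⟨by linarith, by linarith⟩, c1⟩
      rw [DKer, if_neg hne, zero_mul]
  rw [step1, ← himg]
  rw [integral_image_eq_integral_abs_deriv_smul measurableSet_Ioo
      (f' := fun s => 2*y*z / Real.sqrt ((y-z)^2 + 4*y*z*s))
      (fun s hs => by
        have h0 := hu s hs
        have haff : HasDerivAt (fun s : ℝ => (y-z)^2 + 4*y*z*s) (4*y*z) s := by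
          simpa using ((hasDerivAt_id s).const_mul (4*y*z)).const_add ((y-z)^2)
        have hd := (Real.hasDerivAt_sqrt h0.ne').comp s haff
        have e : 1 / (2 * Real.sqrt ((y-z)^2 + 4*y*z*s)) * (4*y*z)
            = 2*y*z / Real.sqrt ((y-z)^2 + 4*y*z*s) := by
          have hs0 : Real.sqrt ((y-z)^2 + 4*y*z*s) ≠ 0 := by
            positivity
          field_simp
          ring
        rw [e] at hd
        exact hd.hasDerivWithinAt)
      (fun s1 h1 s2 h2 heq => by
        have e1 : (y-z)^2 + 4*y*z*s1 = (y-z)^2 + 4*y*z*s2 := by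
          have := congrArg (fun u => u^2) heq
          simpa [hf, Real.sq_sqrt (hu s1 h1).le, Real.sq_sqrt (hu s2 h2).le] using this
        have h4 : (4:ℝ)*y*z ≠ 0 := by positivity
        field_simp at e1
        have h5 : (4*y*z) * (s1 - s2) = 0 := by linear_combination e1
        exact sub_eq_zero.mp ((mul_eq_zero.mp h5).resolve_left h4))]
  -- pointwise identity
  apply setIntegral_congr_fun measurableSet_Ioo
  intro s hs
  have h0 := hu s hs
  set u : ℝ := (y-z)^2 + 4*y*z*s with hudef
  set w : ℝ := Real.sqrt u with hwdef
  have hw0 : 0 < w := Real.sqrt_pos.mpr h0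
  have hw2 : w^2 = u := Real.sq_sqrt h0.le
  have hwmem : w ∈ Ioo |y-z| (y+z) := by
    rw [← himg]; exact ⟨s, hs, rfl⟩
  have htri : w < y + z ∧ y < w + z ∧ z < w + y := by
    obtain ⟨hl, hr⟩ := hwmem
    refine ⟨hr, ?_, ?_⟩
    · linarith [le_abs_self (y-z)]
    · linarith [neg_abs_le (y-z)]
  have hss : 0 < s * (1-s) := mul_pos hs.1 (by nlinarith [hs.2])
  -- triArea value
  have hQ : ((w + y + z) / 2) * ((w + y + z) / 2 - w) * ((w + y + z) / 2 - y)
      * ((w + y + z) / 2 - z) = (y*z)^2 * (s*(1-s)) := by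
    have h' : w^2 = (y-z)^2 + 4*y*z*s := hw2
    linear_combination (1/16 * ((y+z)^2 + (y-z)^2 - w^2 - ((y-z)^2 + 4*y*z*s))) * h'
  have htA : triArea w y z = y * z * Real.sqrt (s*(1-s)) := by
    rw [triArea, hQ, Real.sqrt_mul (by positivity), Real.sqrt_sq hyz.le]
  show |2*y*z / Real.sqrt u| • (DKer lam w y z * w ^ (2*lam))
      = cLam lam * (2:ℝ)^(2*lam-1) * (s*(1-s))^(lam-1)
  rw [smul_eq_mul, DKer, if_pos htri, htA]
  rw [abs_of_pos (by positivity : (0:ℝ) < 2*y*z / Real.sqrt u)]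
  -- rpow algebra
  have e1 : (w * y * z) ^ (1 - 2*lam) = w ^ (1-2*lam) * (y*z) ^ (1-2*lam) := by
    rw [mul_assoc, Real.mul_rpow hw0.le (by positivity)]
  have e2 : (y * z * Real.sqrt (s*(1-s))) ^ (2*lam-2)
      = (y*z) ^ (2*lam-2) * (s*(1-s)) ^ (lam-1) := by
    rw [Real.mul_rpow (by positivity) (Real.sqrt_nonneg _), Real.sqrt_eq_rpow,
      ← Real.rpow_mul hss.le, show 1/(2:ℝ) * (2*lam-2) = lam - 1 by ring]
  have hA : (y*z)^(1-2*lam) * (y*z)^(2*lam-2) = (y*z)⁻¹ := by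
    rw [← Real.rpow_add hyz, show 1-2*lam + (2*lam-2) = -1 by ring, Real.rpow_neg_one]
  have hW : w^(1-2*lam) * w^(2*lam) = w := by
    rw [← Real.rpow_add hw0, show 1-2*lam + 2*lam = 1 by ring, Real.rpow_one]
  have h2 : (2:ℝ) * (2:ℝ)^(2*lam-2) = (2:ℝ)^(2*lam-1) := by
    rw [show (2:ℝ)*(2:ℝ)^(2*lam-2) = (2:ℝ)^(1:ℝ)*(2:ℝ)^(2*lam-2) by rw [Real.rpow_one],
      ← Real.rpow_add (by norm_num : (0:ℝ) < 2), show (1:ℝ)+(2*lam-2) = 2*lam-1 by ring]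
  rw [e1, e2]
  have hwne : w ≠ 0 := hw0.ne'
  have hyzne : (y*z) ≠ 0 := hyz.ne'
  calc 2*y*z / w * (cLam lam * (2:ℝ)^(2*lam-2) * (w^(1-2*lam) * (y*z)^(1-2*lam))
        * ((y*z)^(2*lam-2) * (s*(1-s))^(lam-1)) * w^(2*lam))
      = cLam lam * ((2:ℝ) * (2:ℝ)^(2*lam-2)) * ((y*z) * ((y*z)^(1-2*lam) * (y*z)^(2*lam-2)))
        * ((w^(1-2*lam) * w^(2*lam)) / w) * (s*(1-s))^(lam-1) := by ring
    _ = cLam lam * (2:ℝ)^(2*lam-1) * (s*(1-s))^(lam-1) := by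
        rw [hA, hW, h2, mul_inv_cancel₀ hyzne, div_self hwne]; ring

section aux
variable (lam : ℝ) (φ : ℝ → ℝ) (t : ℝ)

def GFun : ℝ → ℝ := fun z =>
  (2*lam+1) * (z/t)^(2*lam) * (1/t) * φ (z/t) + (z/t)^(2*lam+1) * (deriv φ (z/t) * (1/t))

variable {lam φ t}

lemma hasDerivAt_gFun (hφ : ContDiff ℝ (⊤ : ℕ∞) φ) (ht : 0 < t) {z : ℝ} (hz : 0 < z) :
    HasDerivAt (fun z' => (z' / t) ^ (2 * lam + 1) * φ (z' / t)) (GFun lam φ t z) z := by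
  have h1 : HasDerivAt (fun z' : ℝ => z' / t) (1/t) z := by
    simpa using (hasDerivAt_id z).div_const t
  have h2 : HasDerivAt (fun z' : ℝ => (z'/t)^(2*lam+1))
      ((2*lam+1) * (z/t)^(2*lam) * (1/t)) z := by
    have hne : z / t ≠ 0 := (div_pos hz ht).ne'
    have := (Real.hasDerivAt_rpow_const (x := z/t) (p := 2*lam+1) (Or.inl hne)).comp z h1
    simpa [Function.comp_def, show 2*lam+1-1 = 2*lam by ring] using this
  have h3 : HasDerivAt (fun z' : ℝ => φ (z'/t)) (deriv φ (z/t) * (1/t)) z :=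
    ((hφ.differentiable (by simp)).differentiableAt.hasDerivAt).comp z h1
  exact h2.mul h3

lemma gFun_cont (hφ : ContDiff ℝ (⊤ : ℕ∞) φ) (hlam : 0 < lam) :
    Continuous (fun z' => (z' / t) ^ (2 * lam + 1) * φ (z' / t)) := by
  have h1 : Continuous fun z' : ℝ => z' / t := continuous_id.div_const t
  exact ((Real.continuous_rpow_const (by linarith)).comp h1).mul (hφ.continuous.comp h1)

lemma GFun_cont (hφ : ContDiff ℝ (⊤ : ℕ∞) φ) (hlam : 0 < lam) : Continuous (GFun lam φ t) := by
  have h1 : Continuous fun z' : ℝ => z' / t := continuous_id.div_const t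
  refine Continuous.add ?_ ?_
  · exact ((continuous_const.mul ((Real.continuous_rpow_const (by linarith)).comp h1)).mul
      continuous_const).mul (hφ.continuous.comp h1)
  · exact ((Real.continuous_rpow_const (by linarith)).comp h1).mul
      (((hφ.continuous_deriv (by simp)).comp h1).mul continuous_const)

lemma GFun_zero_of_gt (hφsupp : Function.support φ ⊆ Ioo (0 : ℝ) 1) (ht : 0 < t)
    {z : ℝ} (hz : t < z) : GFun lam φ t z = 0 := by
  have hgt : 1 < z / t := (one_lt_div ht).mpr hz
  have hφ0 : φ (z/t) = 0 := by
    by_contra h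
    exact absurd (hφsupp h).2 (by linarith)
  have hφ'0 : deriv φ (z/t) = 0 := by
    have hev : φ =ᶠ[nhds (z/t)] (fun _ => (0:ℝ)) := by
      filter_upwards [Ioi_mem_nhds hgt] with u hu
      by_contra h
      exact absurd (hφsupp h).2 (not_lt.mpr hu.le)
    rw [hev.deriv_eq, deriv_const]
  simp [GFun, hφ0, hφ'0]

lemma integral_GFun (hφ : ContDiff ℝ (⊤ : ℕ∞) φ) (hφsupp : Function.support φ ⊆ Ioo (0 : ℝ) 1)
    (hlam : 0 < lam) (ht : 0 < t) :
    ∫ z in Ioo (0:ℝ) t, GFun lam φ t z = 0 := by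
  set g : ℝ → ℝ := fun z' => (z' / t) ^ (2 * lam + 1) * φ (z' / t) with hg
  have hφ1 : φ 1 = 0 := by
    by_contra h
    exact absurd (hφsupp h).2 (lt_irrefl 1)
  have hφz : φ 0 = 0 := by
    by_contra h
    exact absurd (hφsupp h).1 (lt_irrefl 0)
  have hgt : g t = 0 := by
    simp [hg, div_self ht.ne', hφ1]
  have hg0 : g 0 = 0 := by
    simp [hg, Real.zero_rpow (by positivity : 2*lam+1 ≠ 0)]
  rw [← integral_Ioc_eq_integral_Ioo, ← intervalIntegral.integral_of_le ht.le]
  rw [intervalIntegral.integral_eq_sub_of_hasDeriv_right_of_le ht.le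
    ((gFun_cont hφ hlam).continuousOn)
    (fun z hz => (hasDerivAt_gFun hφ ht hz.1).hasDerivWithinAt)
    ((GFun_cont hφ hlam).intervalIntegrable 0 t)]
  show g t - g 0 = 0
  rw [hgt, hg0, sub_zero]

end aux


lemma ae_ne_real (t : ℝ) : ∀ᵐ z : ℝ ∂volume, z ≠ t := by
  rw [MeasureTheory.ae_iff]
  simpa using Real.volume_singleton

/-- `ψ(t,x,y) = 0` whenever `|x−y| ≥ t`. -/
theorem stmt6 (lam : ℝ) (hlam : 0 < lam) (φ : ℝ → ℝ)
    (hφ : ContDiff ℝ (⊤ : ℕ∞) φ) (hφpos : ∀ x, 0 ≤ φ x)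
    (hφsupp : Function.support φ ⊆ Ioo (0 : ℝ) 1)
    (hφnorm : ∫ x in Ioi (0 : ℝ), φ x * x ^ (2 * lam) = 1) :
    ∀ t x y : ℝ, 0 < t → 0 < x → 0 < y → t ≤ |x - y| →
      psiKer lam φ t x y = 0 := by
  intro t x y ht hx hy habs
  have hdg : ∀ {z : ℝ}, 0 < z →
      deriv (fun z' => (z' / t) ^ (2 * lam + 1) * φ (z' / t)) z = GFun lam φ t z :=
    fun hz => (hasDerivAt_gFun hφ ht hz).deriv
  rw [psiKer]
  rcases le_abs.mp habs with h1 | h2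
  · -- case t ≤ x - y
    set K : ℝ := ∫ s in Ioo (0:ℝ) 1, cLam lam * (2:ℝ)^(2*lam-1) * (s*(1-s))^(lam-1) with hK
    have hcong : ∀ᵐ z ∂volume, z ∈ Ioi (0:ℝ) →
        (∫ w in Ioo (0 : ℝ) x,
          DKer lam w y z * deriv (fun z' => (z' / t) ^ (2 * lam + 1) * φ (z' / t)) z
            * w ^ (2 * lam))
        = indicator (Ioo 0 t) (fun z => GFun lam φ t z * K) z := by
      filter_upwards [ae_ne_real t] with z hzt hz0
      rw [mem_Ioi] at hz0
      rcases lt_or_gt_of_ne hzt with hlt | hgt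
      · rw [indicator_of_mem (show z ∈ Ioo (0:ℝ) t from ⟨hz0, hlt⟩) _]
        have hrw : (fun w => DKer lam w y z
              * deriv (fun z' => (z' / t) ^ (2 * lam + 1) * φ (z' / t)) z * w ^ (2 * lam))
            = fun w => deriv (fun z' => (z' / t) ^ (2 * lam + 1) * φ (z' / t)) z
              * (DKer lam w y z * w ^ (2 * lam)) := by
          funext w; ring
        rw [hrw, MeasureTheory.integral_const_mul,
          key_integral lam hy hz0 (by linarith : y + z < x), hdg hz0]
      · rw [indicator_of_notMem (fun hmem => absurd hmem.2 (not_lt.mpr hgt.le))]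
        have hd0 : deriv (fun z' => (z' / t) ^ (2 * lam + 1) * φ (z' / t)) z = 0 := by
          rw [hdg (ht.trans hgt), GFun_zero_of_gt hφsupp ht hgt]
        have heq : EqOn (fun w => DKer lam w y z
              * deriv (fun z' => (z' / t) ^ (2 * lam + 1) * φ (z' / t)) z * w ^ (2 * lam))
            (fun _ => (0:ℝ)) (Ioo 0 x) := by
          intro w _
          simp [hd0]
        rw [setIntegral_congr_fun measurableSet_Ioo heq, integral_zero]
    rw [setIntegral_congr_ae measurableSet_Ioi hcong,
      setIntegral_indicator measurableSet_Ioo,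
      show Ioi (0:ℝ) ∩ Ioo 0 t = Ioo 0 t from
        inter_eq_self_of_subset_right (fun z hz => hz.1),
      MeasureTheory.integral_mul_const, integral_GFun hφ hφsupp hlam ht, zero_mul, mul_zero]
  · -- case t ≤ y - x
    have hzero : ∀ᵐ z ∂volume, z ∈ Ioi (0:ℝ) →
        (∫ w in Ioo (0 : ℝ) x,
          DKer lam w y z * deriv (fun z' => (z' / t) ^ (2 * lam + 1) * φ (z' / t)) z
            * w ^ (2 * lam)) = 0 := by
      filter_upwards [ae_ne_real t] with z hzt hz0
      rw [mem_Ioi] at hz0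
      rcases lt_or_gt_of_ne hzt with hlt | hgt
      · have heq : EqOn (fun w => DKer lam w y z
              * deriv (fun z' => (z' / t) ^ (2 * lam + 1) * φ (z' / t)) z * w ^ (2 * lam))
            (fun _ => (0:ℝ)) (Ioo 0 x) := by
          intro w hw
          have hne : ¬ (w < y + z ∧ y < w + z ∧ z < w + y) := by
            rintro ⟨c1, c2, c3⟩
            have := hw.2
            linarith
          simp [DKer, if_neg hne]
        rw [setIntegral_congr_fun measurableSet_Ioo heq, integral_zero]
      · have hd0 : deriv (fun z' => (z' / t) ^ (2 * lam + 1) * φ (z' / t)) z = 0 := by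
          rw [hdg (ht.trans hgt), GFun_zero_of_gt hφsupp ht hgt]
        have heq : EqOn (fun w => DKer lam w y z
              * deriv (fun z' => (z' / t) ^ (2 * lam + 1) * φ (z' / t)) z * w ^ (2 * lam))
            (fun _ => (0:ℝ)) (Ioo 0 x) := by
          intro w _
          simp [hd0]
        rw [setIntegral_congr_fun measurableSet_Ioo heq, integral_zero]
    rw [setIntegral_congr_ae measurableSet_Ioi hzero, integral_zero, mul_zero]
end
end

section
/- Let λ > 0, let φ ∈ C_c^∞(ℝ₊) with supp φ ⊂ (0,1) and ∫₀^∞ φ x^{2λ} dx = 1, and let ψ(t,x,y) := −t^{−1} x^{−2λ} ∫₀^∞ ∫₀^x D(w,y,z) ∂_z[(z/t)^{2λ+1} φ(z/t)] w^{2λ} dw dz. Then for every t, x > 0, ∫₀^∞ ψ(t,x,y) y^{2λ} dy = 0. -/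
noncomputable section
open MeasureTheory Set

lemma rpow_algebra {lam w y z G : ℝ} (hw : 0 < w) (hy : 0 < y) (hz : 0 < z) (hG : 0 < G) :
    (2:ℝ) ^ (2*lam-2) * (w*y*z) ^ (1-2*lam) * (w*z/2*Real.sqrt G) ^ (2*lam-2) * y ^ (2*lam)
      = G ^ (lam-1) * (y/(w*z)) := by
  have hsG : 0 < Real.sqrt G := Real.sqrt_pos.mpr hG
  have hb : 0 < w*z/2*Real.sqrt G := by positivity
  have hwyz : 0 < w*y*z := by positivity
  have hL : 0 < (2:ℝ) ^ (2*lam-2) * (w*y*z) ^ (1-2*lam) * (w*z/2*Real.sqrt G) ^ (2*lam-2)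
      * y ^ (2*lam) := by positivity
  have hR : 0 < G ^ (lam-1) * (y/(w*z)) := by positivity
  apply Real.log_injOn_pos (mem_Ioi.mpr hL) (mem_Ioi.mpr hR)
  rw [Real.log_mul (by positivity) (by positivity), Real.log_mul (by positivity) (by positivity),
    Real.log_mul (by positivity) (by positivity), Real.log_mul (by positivity) (by positivity),
    Real.log_rpow two_pos, Real.log_rpow hwyz, Real.log_rpow hb, Real.log_rpow hy,
    Real.log_rpow hG, Real.log_mul (by positivity) hz.ne', Real.log_mul hw.ne' hy.ne',
    Real.log_div (by positivity) (by positivity), Real.log_mul (by positivity) hsG.ne',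
    Real.log_div (by positivity) two_ne_zero, Real.log_mul hw.ne' hz.ne',
    Real.log_sqrt hG.le]
  ring

/-- pointwise identity on the open interval -/
lemma DKer_mul_eq {lam w z : ℝ} (hw : 0 < w) (hz : 0 < z) {y : ℝ}
    (hy1 : |w - z| < y) (hy2 : y < w + z) :
    DKer lam w y z * y ^ (2*lam)
      = cLam lam * ((1 - ((w^2+z^2-y^2)/(2*(w*z)))^2) ^ (lam-1) * (y / (w*z))) := by
  have hy0 : 0 < y := lt_of_le_of_lt (abs_nonneg _) hy1
  obtain ⟨ha1, ha2⟩ := abs_lt.mp hy1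
  have htri : w < y + z ∧ y < w + z ∧ z < w + y :=
    ⟨by linarith, hy2, by linarith⟩
  have hwz : (0:ℝ) < w * z := mul_pos hw hz
  set s : ℝ := (w^2+z^2-y^2)/(2*(w*z)) with hs
  have hB : 0 < y^2 - (w-z)^2 := by
    have := pow_lt_pow_left₀ hy1 (abs_nonneg _) (n := 2) (by norm_num)
    rw [sq_abs] at this; linarith
  have hA : 0 < (w+z)^2 - y^2 := by nlinarith
  have h1s : 0 < 1 - s^2 := by
    rw [hs, div_pow, sub_pos, div_lt_one (by positivity)]
    nlinarith
  have htriA : triArea w y z = w*z/2 * Real.sqrt (1 - s^2) := by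
    rw [triArea, show ((w+y+z)/2)*((w+y+z)/2-w)*((w+y+z)/2-y)*((w+y+z)/2-z)
        = (w*z/2)^2*(1-s^2) from by rw [hs]; field_simp; ring,
      Real.sqrt_mul (by positivity), Real.sqrt_sq (by positivity)]
  calc DKer lam w y z * y ^ (2*lam)
      = cLam lam * ((2:ℝ) ^ (2*lam-2) * (w*y*z) ^ (1-2*lam)
          * (w*z/2*Real.sqrt (1-s^2)) ^ (2*lam-2) * y ^ (2*lam)) := by
        rw [DKer, if_pos htri, htriA]; ring
    _ = cLam lam * ((1 - s^2) ^ (lam-1) * (y / (w*z))) := by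
        rw [rpow_algebra hw hy0 hz h1s]

/-- vanishing outside the interval -/
lemma DKer_eq_zero {lam w z y : ℝ} (hw : 0 < w) (hz : 0 < z)
    (h : y ∉ Ioo (|w - z|) (w + z)) : DKer lam w y z = 0 := by
  rw [DKer, if_neg]
  rintro ⟨h1, h2, h3⟩
  apply h
  constructor
  · rw [abs_lt]; constructor <;> linarith
  · exact h2

lemma cLam_pos {lam : ℝ} (h : 0 < lam) : 0 < cLam lam := by
  have h1 : 0 < Real.Gamma lam := Real.Gamma_pos_of_pos h
  have h2 : 0 < Real.Gamma (lam + 1 / 2) := Real.Gamma_pos_of_pos (by linarith)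
  have h3 : 0 < Real.sqrt Real.pi := Real.sqrt_pos.mpr Real.pi_pos
  exact div_pos h2 (mul_pos h1 h3)

lemma DKer_nonneg {lam w y z : ℝ} (hlam : 0 < lam) (hw : 0 < w) (hy : 0 < y) (hz : 0 < z) :
    0 ≤ DKer lam w y z := by
  rw [DKer]
  split
  · have ht : 0 ≤ triArea w y z := Real.sqrt_nonneg _
    have hc := (cLam_pos hlam).le
    exact mul_nonneg (mul_nonneg (mul_nonneg hc (Real.rpow_nonneg (by norm_num) _))
      (Real.rpow_nonneg (by positivity) _)) (Real.rpow_nonneg ht _)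
  · exact le_refl 0

lemma Jint {lam : ℝ} (hlam : 0 < lam) :
    IntegrableOn (fun s : ℝ => (1 - s^2) ^ (lam-1)) (Ioo (-1:ℝ) 1) := by
  have hmeas : Measurable (fun s : ℝ => (1 - s^2) ^ (lam-1)) := by fun_prop
  rcases le_or_gt 1 lam with hl | hl
  · apply Measure.integrableOn_of_bounded (measure_Ioo_lt_top.ne) hmeas.aestronglyMeasurable
      (M := 1)
    filter_upwards [ae_restrict_mem measurableSet_Ioo] with s hs
    have h1 : 0 ≤ 1 - s^2 := by nlinarith [hs.1, hs.2]
    have h2 : 1 - s^2 ≤ 1 := by nlinarith [sq_nonneg s]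
    rw [Real.norm_eq_abs, abs_of_nonneg (Real.rpow_nonneg h1 _)]
    exact Real.rpow_le_one h1 h2 (by linarith)
  · have hp : (-1:ℝ) < lam - 1 := by linarith
    have hbase : IntervalIntegrable (fun u : ℝ => u ^ (lam-1)) volume 0 2 :=
      intervalIntegral.intervalIntegrable_rpow' hp
    have h1 : IntervalIntegrable (fun s : ℝ => (1-s) ^ (lam-1)) volume (-1) 1 := by
      have := hbase.comp_sub_left 1
      norm_num at this
      exact this.symm
    have h2 : IntervalIntegrable (fun s : ℝ => (1+s) ^ (lam-1)) volume (-1) 1 := by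
      have := hbase.comp_sub_right (-1)
      norm_num at this
      have e : (fun s : ℝ => (1+s) ^ (lam-1)) = (fun s : ℝ => (s - (-1)) ^ (lam-1)) := by
        funext s; ring_nf
      rw [e]
      exact hbase.comp_sub_right (-1) |>.mono_set (by
        rw [uIcc_of_le (by norm_num : (0:ℝ)+(-1) ≤ 2+(-1)), uIcc_of_le (by norm_num : (-1:ℝ) ≤ 1)]
        norm_num)
    have h1' : IntegrableOn (fun s : ℝ => (1-s) ^ (lam-1)) (Ioo (-1:ℝ) 1) :=
      h1.1.mono_set Ioo_subset_Ioc_self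
    have h2' : IntegrableOn (fun s : ℝ => (1+s) ^ (lam-1)) (Ioo (-1:ℝ) 1) :=
      h2.1.mono_set Ioo_subset_Ioc_self
    apply Integrable.mono' (h1'.add h2') hmeas.aestronglyMeasurable
    filter_upwards [ae_restrict_mem measurableSet_Ioo] with s hs
    have hs1 : 0 < 1 - s := by linarith [hs.2]
    have hs2 : 0 < 1 + s := by linarith [hs.1]
    have hfac : 1 - s^2 = (1-s)*(1+s) := by ring
    rw [Real.norm_eq_abs, abs_of_nonneg (Real.rpow_nonneg (by nlinarith) _), hfac,
      Real.mul_rpow hs1.le hs2.le]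
    rcases le_total 0 s with hs0 | hs0
    · have : (1+s) ^ (lam-1) ≤ 1 :=
        Real.rpow_le_one_of_one_le_of_nonpos (by linarith) (by linarith)
      have hle : (1-s)^(lam-1) * (1+s)^(lam-1) ≤ (1-s)^(lam-1) * 1 :=
        mul_le_mul_of_nonneg_left this (Real.rpow_nonneg hs1.le _)
      have := Real.rpow_nonneg hs2.le (lam-1)
      simpa using hle.trans (by linarith)
    · have : (1-s) ^ (lam-1) ≤ 1 :=
        Real.rpow_le_one_of_one_le_of_nonpos (by linarith) (by linarith)
      have hle : (1-s)^(lam-1) * (1+s)^(lam-1) ≤ 1 * (1+s)^(lam-1) :=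
        mul_le_mul_of_nonneg_right this (Real.rpow_nonneg hs2.le _)
      have := Real.rpow_nonneg hs1.le (lam-1)
      simpa using hle.trans (by linarith)

lemma DKer_integral {lam : ℝ} (hlam : 0 < lam) {w z : ℝ} (hw : 0 < w) (hz : 0 < z) :
    IntegrableOn (fun y => DKer lam w y z * y ^ (2*lam)) (Ioi (0:ℝ)) ∧
    ∫ y in Ioi (0:ℝ), DKer lam w y z * y ^ (2*lam)
      = cLam lam * ∫ s in Ioo (-1:ℝ) 1, (1 - s^2) ^ (lam-1) := by
  have hwz : (0:ℝ) < w * z := mul_pos hw hz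
  set u : ℝ → ℝ := fun s => w^2+z^2-2*(w*z)*s with hu_def
  set f : ℝ → ℝ := fun s => Real.sqrt (u s) with hf_def
  set f' : ℝ → ℝ := fun s => -(2*(w*z)) / (2 * Real.sqrt (u s)) with hf'_def
  set G : ℝ → ℝ := fun y => DKer lam w y z * y ^ (2*lam) with hG_def
  have hu : ∀ s ∈ Ioo (-1:ℝ) 1, 0 < u s := by
    intro s hs
    simp only [hu_def]
    nlinarith [sq_nonneg (w-z), mul_pos hwz (show (0:ℝ) < 1 - s by linarith [hs.2])]
  have hfpos : ∀ s ∈ Ioo (-1:ℝ) 1, 0 < f s := fun s hs => Real.sqrt_pos.mpr (hu s hs)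
  have hderiv : ∀ s ∈ Ioo (-1:ℝ) 1, HasDerivWithinAt f (f' s) (Ioo (-1:ℝ) 1) s := by
    intro s hs
    have hu' : HasDerivAt u (-(2*(w*z))) s := by
      simpa using ((hasDerivAt_id s).const_mul (2*(w*z))).const_sub (w^2+z^2)
    exact (hu'.sqrt (hu s hs).ne').hasDerivWithinAt
  have hinj : InjOn f (Ioo (-1:ℝ) 1) := by
    intro s1 h1 s2 h2 heq
    have h1' : u s1 = u s2 := by
      have := congrArg (· ^ 2) heq
      simpa [hf_def, Real.sq_sqrt (hu _ h1).le, Real.sq_sqrt (hu _ h2).le] using this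
    have : 2*(w*z)*s1 = 2*(w*z)*s2 := by simp only [hu_def] at h1'; linarith
    exact mul_left_cancel₀ (by positivity) this
  have himg : f '' Ioo (-1:ℝ) 1 = Ioo (|w-z|) (w+z) := by
    ext y
    constructor
    · rintro ⟨s, hs, rfl⟩
      have h1 : (w-z)^2 < u s := by
        simp only [hu_def]
        nlinarith [mul_pos hwz (show (0:ℝ) < 1 - s by linarith [hs.2])]
      have h2 : u s < (w+z)^2 := by
        simp only [hu_def]
        nlinarith [mul_pos hwz (show (0:ℝ) < 1 + s by linarith [hs.1])]
      constructor
      · calc |w-z| = Real.sqrt ((w-z)^2) := (Real.sqrt_sq_eq_abs _).symm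
          _ < f s := Real.sqrt_lt_sqrt (sq_nonneg _) h1
      · calc f s < Real.sqrt ((w+z)^2) := Real.sqrt_lt_sqrt (hu s hs).le h2
          _ = w+z := Real.sqrt_sq (by positivity)
    · intro hy
      have hy0 : 0 < y := lt_of_le_of_lt (abs_nonneg _) hy.1
      have hsq1 : (w-z)^2 < y^2 := by
        have := pow_lt_pow_left₀ hy.1 (abs_nonneg _) (by norm_num : (2:ℕ) ≠ 0)
        rwa [sq_abs] at this
      have hsq2 : y^2 < (w+z)^2 := by nlinarith [hy.2]
      refine ⟨(w^2+z^2-y^2)/(2*(w*z)), ⟨?_, ?_⟩, ?_⟩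
      · rw [lt_div_iff₀ (by positivity)]; nlinarith
      · rw [div_lt_one (by positivity)]; nlinarith
      · have : u ((w^2+z^2-y^2)/(2*(w*z))) = y^2 := by
          simp only [hu_def]; field_simp; ring
        rw [hf_def]; simp only [this]; exact Real.sqrt_sq hy0.le
  have habs : ∀ s ∈ Ioo (-1:ℝ) 1, |f' s| • G (f s) = cLam lam * (1 - s^2) ^ (lam-1) := by
    intro s hs
    have hy : f s ∈ Ioo (|w-z|) (w+z) := himg ▸ mem_image_of_mem f hs
    have hy0 : 0 < f s := hfpos s hs
    have hss : (w^2+z^2-(f s)^2)/(2*(w*z)) = s := by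
      rw [hf_def]; simp only [Real.sq_sqrt (hu s hs).le, hu_def]; field_simp
      rw [Real.sq_sqrt (by have := hu s hs; simp only [hu_def] at this; linarith)]; ring
    have hGv := DKer_mul_eq (lam := lam) hw hz hy.1 hy.2
    rw [hG_def]
    simp only []
    rw [hGv, hss]
    have habs' : |f' s| = (2*(w*z)) / (2 * f s) := by
      rw [hf'_def]
      simp only []
      rw [abs_div, abs_neg, abs_of_pos (by positivity), abs_of_pos (by positivity)]
    rw [smul_eq_mul, habs']
    field_simp
  have hsub := MeasureTheory.integral_image_eq_integral_abs_deriv_smul measurableSet_Ioo hderiv hinj G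
  rw [himg] at hsub
  have hiff := MeasureTheory.integrableOn_image_iff_integrableOn_abs_deriv_smul measurableSet_Ioo hderiv hinj G
  rw [himg] at hiff
  have hIoo : IntegrableOn G (Ioo (|w-z|) (w+z)) := by
    rw [hiff]
    exact MeasureTheory.IntegrableOn.congr_fun ((Jint hlam).const_mul (cLam lam))
      (fun s hs => (habs s hs).symm) measurableSet_Ioo
  have hvanish : ∀ y ∈ Ioi (0:ℝ) \ Ioo (|w-z|) (w+z), G y = 0 := by
    intro y hy
    rw [hG_def]; simp only []
    rw [DKer_eq_zero hw hz hy.2, zero_mul]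
  have hInt : IntegrableOn G (Ioi (0:ℝ)) := by
    have hdiff : IntegrableOn G (Ioi (0:ℝ) \ Ioo (|w-z|) (w+z)) :=
      (integrableOn_zero).congr_fun (fun y hy => (hvanish y hy).symm)
        (measurableSet_Ioi.diff measurableSet_Ioo)
    exact (hIoo.union hdiff).mono_set (fun y hy => by
      by_cases h : y ∈ Ioo (|w-z|) (w+z)
      · exact Or.inl h
      · exact Or.inr ⟨hy, h⟩)
  refine ⟨hInt, ?_⟩
  rw [MeasureTheory.setIntegral_eq_of_subset_of_forall_diff_eq_zero measurableSet_Ioi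
    (fun y hy => lt_of_le_of_lt (abs_nonneg _) hy.1) hvanish, hsub,
    MeasureTheory.setIntegral_congr_fun measurableSet_Ioo habs,
    MeasureTheory.integral_const_mul]


section gsec
variable {lam t : ℝ} {φ : ℝ → ℝ}

lemma gstuff (hlam : 0 < lam) (ht : 0 < t) (hφ : ContDiff ℝ (⊤ : ℕ∞) φ)
    (hφsupp : Function.support φ ⊆ Ioo (0 : ℝ) 1) :
    ∃ M : ℝ,
      (∀ z ∈ Ioi (0:ℝ), ‖deriv (fun z' => (z' / t) ^ (2 * lam + 1) * φ (z' / t)) z‖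
          ≤ (Ioc 0 t).indicator (fun _ => M) z) ∧
      IntegrableOn (deriv (fun z' => (z' / t) ^ (2 * lam + 1) * φ (z' / t))) (Ioi (0:ℝ)) ∧
      ∫ z in Ioi (0:ℝ), deriv (fun z' => (z' / t) ^ (2 * lam + 1) * φ (z' / t)) z = 0 := by
  set g : ℝ → ℝ := fun z' => (z' / t) ^ (2 * lam + 1) * φ (z' / t) with hg_def
  have hφc : Continuous φ := hφ.continuous
  have hφd : ∀ u : ℝ, HasDerivAt φ (deriv φ u) u :=
    fun u => (hφ.differentiable (by simp) u).hasDerivAt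
  have hφ'c : Continuous (deriv φ) := hφ.continuous_deriv (by simp)
  have hφzero : ∀ u : ℝ, u ∉ Ioo (0:ℝ) 1 → φ u = 0 :=
    fun u hu => Function.notMem_support.mp (fun h => hu (hφsupp h))
  have hsupp : HasCompactSupport φ :=
    HasCompactSupport.intro isCompact_Icc
      (fun u hu => hφzero u (fun h => hu (Ioo_subset_Icc_self h)))
  obtain ⟨Cφ, hCφ⟩ := hsupp.exists_bound_of_continuous hφc
  obtain ⟨Cφ', hCφ'⟩ := (hsupp.deriv).exists_bound_of_continuous hφ'c
  have hCφ0 : 0 ≤ Cφ := le_trans (norm_nonneg _) (hCφ 0)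
  have hCφ'0 : 0 ≤ Cφ' := le_trans (norm_nonneg _) (hCφ' 0)
  set F : ℝ → ℝ := fun z =>
    ((2*lam+1) * (z/t) ^ (2*lam) * φ (z/t) + (z/t) ^ (2*lam+1) * deriv φ (z/t)) * (1/t)
    with hF_def
  have hg' : ∀ z ∈ Ioi (0:ℝ), HasDerivAt g (F z) z := by
    intro z hz
    have hzt : 0 < z / t := div_pos hz ht
    have hdiv : HasDerivAt (fun z' : ℝ => z' / t) (1/t) z := (hasDerivAt_id z).div_const t
    have hpow : HasDerivAt (fun u : ℝ => u ^ (2*lam+1)) ((2*lam+1) * (z/t) ^ (2*lam+1-1)) (z/t) :=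
      Real.hasDerivAt_rpow_const (Or.inl hzt.ne')
    have hprod := (hpow.mul (hφd (z/t))).comp z hdiv
    have : (((fun u : ℝ => u ^ (2*lam+1)) * φ) ∘ fun z' : ℝ => z' / t) = g := rfl
    rw [this] at hprod
    refine hprod.congr_deriv ?_
    rw [show 2*lam+1-1 = 2*lam by ring, hF_def]
  have hG'eq : ∀ z ∈ Ioi (0:ℝ), deriv g z = F z := fun z hz => (hg' z hz).deriv
  have hgz : ∀ z : ℝ, t ≤ z → g z = 0 := by
    intro z hz
    have : φ (z/t) = 0 := hφzero _ (fun h => absurd h.2 (by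
      rw [not_lt]; exact (one_le_div ht).mpr hz))
    simp [hg_def, this]
  have hG'zero : ∀ z : ℝ, t < z → deriv g z = 0 := by
    intro z hz
    have hev : g =ᶠ[nhds z] (fun _ => 0) := by
      filter_upwards [Ioi_mem_nhds hz] with z' hz'
      exact hgz z' (le_of_lt hz')
    rw [hev.deriv_eq, deriv_const]
  set M : ℝ := ((2*lam+1) * Cφ + Cφ') * (1/t) with hM_def
  have hFbound : ∀ z ∈ Ioc (0:ℝ) t, ‖F z‖ ≤ M := by
    intro z hz
    have h1 : (0:ℝ) ≤ z / t := le_of_lt (div_pos hz.1 ht)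
    have h2 : z / t ≤ 1 := (div_le_one ht).mpr hz.2
    have hp1 : (z/t) ^ (2*lam) ≤ 1 := Real.rpow_le_one h1 h2 (by linarith)
    have hp2 : (z/t) ^ (2*lam+1) ≤ 1 := Real.rpow_le_one h1 h2 (by linarith)
    have hp1' : (0:ℝ) ≤ (z/t) ^ (2*lam) := Real.rpow_nonneg h1 _
    have hp2' : (0:ℝ) ≤ (z/t) ^ (2*lam+1) := Real.rpow_nonneg h1 _
    rw [hF_def]
    simp only [norm_mul, Real.norm_eq_abs]
    rw [abs_of_pos (one_div_pos.mpr ht)]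
    apply mul_le_mul_of_nonneg_right _ (by positivity)
    calc |(2*lam+1) * (z/t)^(2*lam) * φ (z/t) + (z/t)^(2*lam+1) * deriv φ (z/t)|
        ≤ |(2*lam+1) * (z/t)^(2*lam) * φ (z/t)| + |(z/t)^(2*lam+1) * deriv φ (z/t)| :=
          abs_add_le _ _
      _ ≤ (2*lam+1) * Cφ + Cφ' := by
          apply add_le_add
          · rw [abs_mul, abs_mul, abs_of_pos (by linarith : (0:ℝ) < 2*lam+1),
              abs_of_nonneg hp1']
            calc (2*lam+1) * (z/t)^(2*lam) * |φ (z/t)|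
                ≤ (2*lam+1) * 1 * Cφ := by
                  apply mul_le_mul (mul_le_mul_of_nonneg_left hp1 (by linarith))
                    (by simpa using hCφ (z/t)) (abs_nonneg _) (by linarith)
              _ = (2*lam+1) * Cφ := by ring
          · rw [abs_mul, abs_of_nonneg hp2']
            calc (z/t)^(2*lam+1) * |deriv φ (z/t)|
                ≤ 1 * Cφ' := mul_le_mul hp2 (by simpa using hCφ' (z/t)) (abs_nonneg _)
                  zero_le_one
              _ = Cφ' := one_mul _
  have hbnd : ∀ z ∈ Ioi (0:ℝ), ‖deriv g z‖ ≤ (Ioc 0 t).indicator (fun _ => M) z := by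
    intro z hz
    by_cases hzt : z ≤ t
    · rw [indicator_of_mem (show z ∈ Ioc 0 t from ⟨hz, hzt⟩) (fun _ => M), hG'eq z hz]
      exact hFbound z ⟨hz, hzt⟩
    · rw [indicator_of_notMem (fun h => hzt h.2), hG'zero z (lt_of_not_ge hzt)]
      simp
  have hint : IntegrableOn (deriv g) (Ioi (0:ℝ)) := by
    apply Integrable.mono' ((integrable_indicator_iff measurableSet_Ioc).mpr
      ((integrableOn_const (C := M) measure_Ioc_lt_top.ne))).restrict
      ((measurable_deriv g).aestronglyMeasurable)
    filter_upwards [ae_restrict_mem measurableSet_Ioi] with z hz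
    exact hbnd z hz
  refine ⟨M, hbnd, hint, ?_⟩
  have h0 : g 0 = 0 := by
    simp [hg_def, Real.zero_rpow (show 2*lam+1 ≠ 0 by positivity)]
  have hcont : ContinuousWithinAt g (Ici 0) 0 := by
    apply ContinuousAt.continuousWithinAt
    apply ContinuousAt.mul
    · exact ((continuous_id.div_const t).continuousAt).rpow_const (Or.inr (by linarith))
    · exact (hφc.comp (continuous_id.div_const t)).continuousAt
  have htend : Filter.Tendsto g Filter.atTop (nhds 0) := by
    apply Filter.Tendsto.congr' _ tendsto_const_nhds
    filter_upwards [Filter.Ioi_mem_atTop t] with z hz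
    exact (hgz z hz.le).symm
  have := MeasureTheory.integral_Ioi_of_hasDerivAt_of_tendsto hcont
    (fun z hz => by rw [hG'eq z hz]; exact hg' z hz) hint htend
  rw [this, h0, sub_zero]
end gsec


lemma measurable_DKer (lam : ℝ) :
    Measurable (fun p : ℝ × ℝ × ℝ => DKer lam p.1 p.2.1 p.2.2) := by
  unfold DKer triArea
  refine Measurable.ite ?_ ?_ measurable_const
  · simp only [setOf_and]
    exact ((measurableSet_lt measurable_fst (measurable_snd.fst.add measurable_snd.snd)).inter
      ((measurableSet_lt measurable_snd.fst (measurable_fst.add measurable_snd.snd)).inter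
       (measurableSet_lt measurable_snd.snd (measurable_fst.add measurable_snd.fst))))
  · fun_prop


set_option maxHeartbeats 2000000 in
/-- For every `t, x > 0`, `∫₀^∞ ψ(t,x,y) y^{2λ} dy = 0`. -/
theorem stmt7 (lam : ℝ) (hlam : 0 < lam) (φ : ℝ → ℝ)
    (hφ : ContDiff ℝ (⊤ : ℕ∞) φ)
    (hφsupp : Function.support φ ⊆ Ioo (0 : ℝ) 1)
    (hφnorm : ∫ x in Ioi (0 : ℝ), φ x * x ^ (2 * lam) = 1) :
    ∀ t x : ℝ, 0 < t → 0 < x →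
      ∫ y in Ioi (0 : ℝ), psiKer lam φ t x y * y ^ (2 * lam) = 0 := by
  intro t x ht hx
  obtain ⟨M, hbnd, hG'int, hG'zero⟩ := gstuff hlam ht hφ hφsupp
  simp only [psiKer]
  set G' : ℝ → ℝ := deriv (fun z' : ℝ => (z' / t) ^ (2 * lam + 1) * φ (z' / t)) with hG'def
  set μy := volume.restrict (Ioi (0:ℝ)) with hμy
  set μw := volume.restrict (Ioo (0:ℝ) x) with hμw
  set K : ℝ := cLam lam * ∫ s in Ioo (-1:ℝ) 1, (1 - s^2) ^ (lam-1) with hK_def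
  have hM0 : 0 ≤ M := le_trans (norm_nonneg (G' t)) (by
    simpa [indicator_of_mem (show t ∈ Ioc 0 t from ⟨ht, le_refl t⟩)] using hbnd t ht)
  set H : ℝ → ℝ × ℝ → ℝ :=
    fun y q => DKer lam q.2 y q.1 * G' q.1 * q.2 ^ (2 * lam) * y ^ (2 * lam) with hH_def
  set B : ℝ × ℝ × ℝ → ℝ :=
    fun p => DKer lam p.2.2 p.1 p.2.1 * p.1 ^ (2 * lam)
      * ((Ioc 0 t).indicator (fun _ => M) p.2.1 * p.2.2 ^ (2 * lam)) with hB_def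
  -- basic integrabilities
  have hwint : IntegrableOn (fun w : ℝ => w ^ (2 * lam)) (Ioo (0:ℝ) x) := by
    apply Measure.integrableOn_of_bounded (measure_Ioo_lt_top.ne) (by fun_prop)
      (M := x ^ (2 * lam))
    filter_upwards [ae_restrict_mem measurableSet_Ioo] with w hw
    rw [Real.norm_eq_abs, abs_of_nonneg (Real.rpow_nonneg hw.1.le _)]
    exact Real.rpow_le_rpow hw.1.le hw.2.le (by linarith)
  have hindint : Integrable ((Ioc (0:ℝ) t).indicator (fun _ => M)) μy :=
    (((integrable_indicator_iff measurableSet_Ioc).mpr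
      (integrableOn_const measure_Ioc_lt_top.ne))).restrict
  have hcqint : Integrable
      (fun q : ℝ × ℝ => (Ioc 0 t).indicator (fun _ => M) q.1 * q.2 ^ (2 * lam))
      (μy.prod μw) := hindint.mul_prod hwint
  -- measurability of B and H
  have hmeasDD : Measurable (fun p : ℝ × ℝ × ℝ => DKer lam p.2.2 p.1 p.2.1) :=
    (measurable_DKer lam).comp
      ((measurable_snd.snd).prodMk (measurable_fst.prodMk measurable_snd.fst))
  have hmeasB : Measurable B := by
    apply ((hmeasDD.mul (by fun_prop)).mul ?_)
    exact ((measurable_const.indicator measurableSet_Ioc).comp measurable_snd.fst).mul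
      (by fun_prop)
  have hmeasH : Measurable (Function.uncurry H) := by
    have : Function.uncurry H = fun p : ℝ × ℝ × ℝ =>
        DKer lam p.2.2 p.1 p.2.1 * G' p.2.1 * p.2.2 ^ (2 * lam) * p.1 ^ (2 * lam) := rfl
    rw [this]
    exact ((hmeasDD.mul ((measurable_deriv _).comp measurable_snd.fst)).mul
      (by fun_prop)).mul (by fun_prop)
  -- a.e. membership facts
  have haeq : ∀ᵐ q ∂(μy.prod μw), q ∈ (Ioi (0:ℝ)) ×ˢ (Ioo (0:ℝ) x) := by
    rw [hμy, hμw, Measure.prod_restrict]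
    exact ae_restrict_mem (measurableSet_Ioi.prod measurableSet_Ioo)
  have haep : ∀ᵐ p ∂(μy.prod (μy.prod μw)), p ∈ (Ioi (0:ℝ)) ×ˢ ((Ioi (0:ℝ)) ×ˢ (Ioo (0:ℝ) x)) := by
    rw [hμy, hμw, Measure.prod_restrict, Measure.prod_restrict]
    exact ae_restrict_mem (measurableSet_Ioi.prod (measurableSet_Ioi.prod measurableSet_Ioo))
  -- integrability of the dominating function B
  have hBint : Integrable B (μy.prod (μy.prod μw)) := by
    rw [integrable_prod_iff' hmeasB.aestronglyMeasurable]
    constructor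
    · filter_upwards [haeq] with q hq
      simp only [hB_def]
      exact ((DKer_integral hlam (mem_Ioo.mp hq.2).1 (mem_Ioi.mp hq.1)).1).mul_const _
    · have hKeq : (fun q : ℝ × ℝ => (Ioc 0 t).indicator (fun _ => M) q.1 * q.2 ^ (2 * lam) * K)
          =ᵐ[μy.prod μw] (fun q : ℝ × ℝ => ∫ y, ‖B (y, q)‖ ∂μy) := by
        filter_upwards [haeq] with q hq
        have hD := DKer_integral hlam (mem_Ioo.mp hq.2).1 (mem_Ioi.mp hq.1)
        have hcq0 : 0 ≤ (Ioc 0 t).indicator (fun _ => M) q.1 * q.2 ^ (2 * lam) :=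
          mul_nonneg (indicator_nonneg (fun _ _ => hM0) _)
            (Real.rpow_nonneg (le_of_lt (mem_Ioo.mp hq.2).1) _)
        have heq2 : (fun y : ℝ => ‖B (y, q)‖) =ᵐ[μy]
            (fun y : ℝ => DKer lam q.2 y q.1 * y ^ (2 * lam)
              * ((Ioc 0 t).indicator (fun _ => M) q.1 * q.2 ^ (2 * lam))) := by
          filter_upwards [ae_restrict_mem measurableSet_Ioi] with y hy
          have hD0 := DKer_nonneg hlam (mem_Ioo.mp hq.2).1 (mem_Ioi.mp hy) (mem_Ioi.mp hq.1)
          simp only [hB_def, Real.norm_eq_abs]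
          rw [abs_of_nonneg (mul_nonneg (mul_nonneg hD0
            (Real.rpow_nonneg (le_of_lt (mem_Ioi.mp hy)) _)) hcq0)]
        rw [integral_congr_ae heq2, integral_mul_const, hD.2]
        ring
      exact Integrable.congr (hcqint.mul_const K) hKeq
  -- domination of H by B
  have hdom : ∀ᵐ p ∂(μy.prod (μy.prod μw)), ‖Function.uncurry H p‖ ≤ B p := by
    filter_upwards [haep] with p hp
    have hy := mem_Ioi.mp hp.1
    have hz := mem_Ioi.mp hp.2.1
    have hw := (mem_Ioo.mp hp.2.2).1
    have hD0 := DKer_nonneg hlam hw hy hz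
    have hb := hbnd p.2.1 hp.2.1
    calc ‖Function.uncurry H p‖
        = DKer lam p.2.2 p.1 p.2.1 * p.2.2 ^ (2 * lam) * p.1 ^ (2 * lam) * ‖G' p.2.1‖ := by
          simp only [Function.uncurry, hH_def, Real.norm_eq_abs, abs_mul]
          rw [abs_of_nonneg hD0, abs_of_nonneg (Real.rpow_nonneg hw.le _),
            abs_of_nonneg (Real.rpow_nonneg hy.le _)]
          ring
      _ ≤ DKer lam p.2.2 p.1 p.2.1 * p.2.2 ^ (2 * lam) * p.1 ^ (2 * lam)
            * (Ioc 0 t).indicator (fun _ => M) p.2.1 := by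
          apply mul_le_mul_of_nonneg_left hb
          exact mul_nonneg (mul_nonneg hD0 (Real.rpow_nonneg hw.le _))
            (Real.rpow_nonneg hy.le _)
      _ = B p := by rw [hB_def]; ring
  have hHint : Integrable (Function.uncurry H) (μy.prod (μy.prod μw)) :=
    hBint.mono' hmeasH.aestronglyMeasurable hdom
  -- the main computation
  have key : ∫ y in Ioi (0:ℝ),
      (∫ z in Ioi (0:ℝ), ∫ w in Ioo (0:ℝ) x, DKer lam w y z * G' z * w ^ (2 * lam))
        * y ^ (2 * lam) = 0 := by
    have step1 : ∀ y : ℝ,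
        (∫ z in Ioi (0:ℝ), ∫ w in Ioo (0:ℝ) x, DKer lam w y z * G' z * w ^ (2 * lam))
          * y ^ (2 * lam)
        = ∫ z in Ioi (0:ℝ), ∫ w in Ioo (0:ℝ) x, H y (z, w) := by
      intro y
      simp only [hH_def, ← integral_mul_const]
    calc ∫ y in Ioi (0:ℝ),
        (∫ z in Ioi (0:ℝ), ∫ w in Ioo (0:ℝ) x, DKer lam w y z * G' z * w ^ (2 * lam))
          * y ^ (2 * lam)
        = ∫ y, (∫ q, H y q ∂(μy.prod μw)) ∂μy := by
          apply integral_congr_ae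
          filter_upwards [hHint.prod_right_ae] with y hy
          rw [step1 y]
          exact (MeasureTheory.integral_prod (fun q => H y q) hy).symm
      _ = ∫ q, (∫ y, H y q ∂μy) ∂(μy.prod μw) := integral_integral_swap hHint
      _ = ∫ q, (G' q.1 * q.2 ^ (2 * lam)) * K ∂(μy.prod μw) := by
          apply integral_congr_ae
          filter_upwards [haeq] with q hq
          have h1 : ∀ y : ℝ, H y q
              = (G' q.1 * q.2 ^ (2 * lam)) * (DKer lam q.2 y q.1 * y ^ (2 * lam)) := by
            intro y; simp only [hH_def]; ring
          simp only [h1]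
          rw [integral_const_mul, (DKer_integral hlam (mem_Ioo.mp hq.2).1 (mem_Ioi.mp hq.1)).2]
      _ = K * ((∫ z, G' z ∂μy) * (∫ w, w ^ (2 * lam) ∂μw)) := by
          simp only [mul_comm _ K]
          rw [integral_const_mul]
          exact congrArg (fun r => K * r)
            (MeasureTheory.integral_prod_mul (f := G') (g := fun w : ℝ => w ^ (2 * lam)))
      _ = 0 := by
          rw [show (∫ z, G' z ∂μy) = 0 from hG'zero]
          ring
  calc ∫ y in Ioi (0:ℝ), -(t⁻¹ * x ^ (-(2 * lam)))
        * (∫ z in Ioi (0:ℝ), ∫ w in Ioo (0:ℝ) x, DKer lam w y z * G' z * w ^ (2 * lam))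
        * y ^ (2 * lam)
      = -(t⁻¹ * x ^ (-(2 * lam))) * ∫ y in Ioi (0:ℝ),
          (∫ z in Ioi (0:ℝ), ∫ w in Ioo (0:ℝ) x, DKer lam w y z * G' z * w ^ (2 * lam))
            * y ^ (2 * lam) := by
        simp only [mul_assoc]
        rw [integral_const_mul]
    _ = 0 := by rw [key, mul_zero]
end
end

section
/- Let λ > 0 and suppose u, v are C² on ℝ₊ × ℝ₊ and satisfy the Cauchy–Riemann-type system ∂_x u + ∂_t v = 0 and ∂_t u − ∂_x v = (2λ/x) v. Then for every p ∈ ((2λ+1)/(2λ+2), 1), the function F := (u² + v²)^{1/2} satisfies, on the open set where F > 0, the λ-subharmonicity inequality ∂_t²(F^p) + ∂_x²(F^p) + (2λ/x) ∂_x(F^p) ≥ 0. -/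
/-!
Write `Φ = u² + v²` and `L = ∂ₜ² + ∂ₓ² + (2λ/x) ∂ₓ`, so that `F^p = Φ^(p/2)` and
`L(Φ^q) = q Φ^(q-2) ((q-1) |∇Φ|² + Φ LΦ)`. Differentiating the Cauchy–Riemann system and using the
symmetry of mixed partials gives `Lu = 0` and `Lv = (2λ/x²) v`, hence
`LΦ = 2|∇u|² + 2|∇v|² + (4λ/x²) v²`, while the system itself expresses `∇v` through `∇u` and `v`.
The bracket then becomes a quadratic expression in `∇u` which, multiplied by `λ p Φ x²`, is a sum of
squares with nonnegative coefficients as soon as `p (2λ+1) > 2λ`; this follows from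
`p > (2λ+1)/(2λ+2)`.
-/

noncomputable section

open Filter Function Set Topology

def partialT (f : ℝ → ℝ → ℝ) (t x : ℝ) : ℝ := deriv (fun s => f s x) t

def partialX (f : ℝ → ℝ → ℝ) (t x : ℝ) : ℝ := deriv (f t) x

def besselLaplacian (lam : ℝ) (f : ℝ → ℝ → ℝ) (t x : ℝ) : ℝ :=
  partialT (partialT f) t x + partialX (partialX f) t x + 2 * lam / x * partialX f t x

section OneVariable

variable {f f' : ℝ → ℝ} {f'' t : ℝ}

lemma hasDerivAt_deriv_of_eventually (hf : ∀ᶠ s in 𝓝 t, HasDerivAt f (f' s) s)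
    (hf' : HasDerivAt f' f'' t) : HasDerivAt (deriv f) f'' t :=
  hf'.congr_of_eventuallyEq (hf.mono fun _ hs => hs.deriv)

lemma HasDerivAt.eq_zero_of_eventually_eq_zero {f' : ℝ} (hf : HasDerivAt f f' t)
    (h : ∀ᶠ s in 𝓝 t, f s = 0) : f' = 0 :=
  hf.unique ((hasDerivAt_const t 0).congr_of_eventuallyEq h)

lemma hasDerivAt_deriv_sq (hf : ∀ᶠ s in 𝓝 t, HasDerivAt f (f' s) s)
    (hf' : HasDerivAt f' f'' t) :
    HasDerivAt (deriv fun s => f s ^ 2) (2 * (f' t ^ 2 + f t * f'')) t := by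
  have hsq : ∀ᶠ s in 𝓝 t, HasDerivAt (fun s => f s ^ 2) (2 * (f s * f' s)) s :=
    hf.mono fun s hs => (hs.pow 2).congr_deriv (by ring)
  exact (hasDerivAt_deriv_of_eventually hsq ((hf.self_of_nhds.mul hf').const_mul 2)).congr_deriv
    (by ring)

lemma hasDerivAt_deriv_rpow (q : ℝ) (hf : ∀ᶠ s in 𝓝 t, HasDerivAt f (f' s) s)
    (hf' : HasDerivAt f' f'' t) (hpos : 0 < f t) :
    HasDerivAt (deriv fun s => f s ^ q)
      (q * f t ^ (q - 2) * ((q - 1) * f' t ^ 2 + f t * f'')) t := by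
  have hft := hf.self_of_nhds
  have hrpow : ∀ᶠ s in 𝓝 t, HasDerivAt (fun s => f s ^ q) (q * f s ^ (q - 1) * f' s) s := by
    filter_upwards [hf, hft.continuousAt.eventually (lt_mem_nhds hpos)] with s hs hs0
    exact (hs.rpow_const (Or.inl hs0.ne')).congr_deriv (by ring)
  have hpow : HasDerivAt (fun s => f s ^ (q - 1)) ((q - 1) * f t ^ (q - 2) * f' t) t :=
    (hft.rpow_const (Or.inl hpos.ne')).congr_deriv (by rw [sub_sub, one_add_one_eq_two]; ring)
  refine (hasDerivAt_deriv_of_eventually hrpow ((hpow.const_mul q).mul hf')).congr_deriv ?_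
  rw [show q - 1 = q - 2 + 1 by ring, Real.rpow_add_one hpos.ne']
  ring

end OneVariable

section Partials

variable {f g : ℝ → ℝ → ℝ} {t x : ℝ}

lemma DifferentiableAt.hasDerivAt_fderiv_fst (hf : DifferentiableAt ℝ (uncurry f) (t, x)) :
    HasDerivAt (fun s => f s x) (fderiv ℝ (uncurry f) (t, x) (1, 0)) t := by
  have h := hf.hasFDerivAt.comp_hasDerivAt t ((hasDerivAt_id t).prodMk (hasDerivAt_const t x))
  have h' : HasDerivAt (fun s => f s x) _ t := h
  simpa using h'

lemma DifferentiableAt.hasDerivAt_fderiv_snd (hf : DifferentiableAt ℝ (uncurry f) (t, x)) :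
    HasDerivAt (f t) (fderiv ℝ (uncurry f) (t, x) (0, 1)) x := by
  have h := hf.hasFDerivAt.comp_hasDerivAt x ((hasDerivAt_const x t).prodMk (hasDerivAt_id x))
  have h' : HasDerivAt (f t) _ x := h
  simpa using h'

lemma DifferentiableAt.partialT_eq (hf : DifferentiableAt ℝ (uncurry f) (t, x)) :
    partialT f t x = fderiv ℝ (uncurry f) (t, x) (1, 0) :=
  hf.hasDerivAt_fderiv_fst.deriv

lemma DifferentiableAt.partialX_eq (hf : DifferentiableAt ℝ (uncurry f) (t, x)) :
    partialX f t x = fderiv ℝ (uncurry f) (t, x) (0, 1) :=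
  hf.hasDerivAt_fderiv_snd.deriv

lemma DifferentiableAt.hasDerivAt_partialT (hf : DifferentiableAt ℝ (uncurry f) (t, x)) :
    HasDerivAt (fun s => f s x) (partialT f t x) t :=
  hf.hasDerivAt_fderiv_fst.differentiableAt.hasDerivAt

lemma DifferentiableAt.hasDerivAt_partialX (hf : DifferentiableAt ℝ (uncurry f) (t, x)) :
    HasDerivAt (f t) (partialX f t x) x :=
  hf.hasDerivAt_fderiv_snd.differentiableAt.hasDerivAt

lemma ContDiffAt.eventually_differentiableAt {n : WithTop ℕ∞} {z : ℝ × ℝ}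
    (hf : ContDiffAt ℝ n (uncurry f) z) (hn : 1 ≤ n) :
    ∀ᶠ w in 𝓝 z, DifferentiableAt ℝ (uncurry f) w :=
  ((hf.of_le hn).eventually (by simp)).mono fun _ hw => hw.differentiableAt one_ne_zero

lemma ContDiffAt.eventually_hasDerivAt_partialT {n : WithTop ℕ∞}
    (hf : ContDiffAt ℝ n (uncurry f) (t, x)) (hn : 1 ≤ n) :
    ∀ᶠ s in 𝓝 t, HasDerivAt (fun s' => f s' x) (partialT f s x) s :=
  (hf.eventually_differentiableAt hn).curry_nhds.mono fun _ hs =>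
    hs.self_of_nhds.hasDerivAt_partialT

lemma ContDiffAt.eventually_hasDerivAt_partialX {n : WithTop ℕ∞}
    (hf : ContDiffAt ℝ n (uncurry f) (t, x)) (hn : 1 ≤ n) :
    ∀ᶠ w in 𝓝 x, HasDerivAt (f t) (partialX f t w) w :=
  (hf.eventually_differentiableAt hn).curry_nhds.self_of_nhds.mono fun _ hw =>
    hw.hasDerivAt_partialX

lemma ContDiffAt.uncurry_partialT_eventuallyEq {n : WithTop ℕ∞}
    (hf : ContDiffAt ℝ n (uncurry f) (t, x)) (hn : 1 ≤ n) :
    uncurry (partialT f) =ᶠ[𝓝 (t, x)] fun z => fderiv ℝ (uncurry f) z (1, 0) :=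
  (hf.eventually_differentiableAt hn).mono fun _ hz => hz.partialT_eq

lemma ContDiffAt.uncurry_partialX_eventuallyEq {n : WithTop ℕ∞}
    (hf : ContDiffAt ℝ n (uncurry f) (t, x)) (hn : 1 ≤ n) :
    uncurry (partialX f) =ᶠ[𝓝 (t, x)] fun z => fderiv ℝ (uncurry f) z (0, 1) :=
  (hf.eventually_differentiableAt hn).mono fun _ hz => hz.partialX_eq

lemma ContDiffAt.uncurry_partialT {m n : WithTop ℕ∞} (hf : ContDiffAt ℝ n (uncurry f) (t, x))
    (hmn : m + 1 ≤ n) : ContDiffAt ℝ m (uncurry (partialT f)) (t, x) :=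
  ((hf.fderiv_right hmn).clm_apply contDiffAt_const).congr_of_eventuallyEq
    (hf.uncurry_partialT_eventuallyEq (le_add_self.trans hmn))

lemma ContDiffAt.uncurry_partialX {m n : WithTop ℕ∞} (hf : ContDiffAt ℝ n (uncurry f) (t, x))
    (hmn : m + 1 ≤ n) : ContDiffAt ℝ m (uncurry (partialX f)) (t, x) :=
  ((hf.fderiv_right hmn).clm_apply contDiffAt_const).congr_of_eventuallyEq
    (hf.uncurry_partialX_eventuallyEq (le_add_self.trans hmn))

lemma ContDiffAt.hasDerivAt_partialT_partialT (hf : ContDiffAt ℝ 2 (uncurry f) (t, x)) :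
    HasDerivAt (fun s => partialT f s x) (partialT (partialT f) t x) t :=
  ((hf.uncurry_partialT one_add_one_eq_two.le).differentiableAt one_ne_zero).hasDerivAt_partialT

lemma ContDiffAt.hasDerivAt_partialX_partialX (hf : ContDiffAt ℝ 2 (uncurry f) (t, x)) :
    HasDerivAt (partialX f t) (partialX (partialX f) t x) x :=
  ((hf.uncurry_partialX one_add_one_eq_two.le).differentiableAt one_ne_zero).hasDerivAt_partialX

lemma ContDiffAt.partialX_partialT (hf : ContDiffAt ℝ 2 (uncurry f) (t, x)) :
    partialX (partialT f) t x = partialT (partialX f) t x := by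
  have hD : DifferentiableAt ℝ (fderiv ℝ (uncurry f)) (t, x) :=
    (hf.fderiv_right one_add_one_eq_two.le).differentiableAt one_ne_zero
  rw [((hf.uncurry_partialT one_add_one_eq_two.le).differentiableAt one_ne_zero).partialX_eq,
    ((hf.uncurry_partialX one_add_one_eq_two.le).differentiableAt one_ne_zero).partialT_eq,
    (hf.uncurry_partialT_eventuallyEq one_le_two).fderiv_eq,
    (hf.uncurry_partialX_eventuallyEq one_le_two).fderiv_eq,
    fderiv_clm_apply hD (differentiableAt_const _), fderiv_clm_apply hD (differentiableAt_const _)]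
  simpa using hf.isSymmSndFDerivAt (by simp) (0, 1) (1, 0)

end Partials

section BesselLaplacian

variable (lam : ℝ) {f g : ℝ → ℝ → ℝ} {t x : ℝ}

lemma besselLaplacian_eq_of_hasDerivAt {ftt fxx fx : ℝ}
    (htt : HasDerivAt (deriv fun s => f s x) ftt t) (hxx : HasDerivAt (deriv (f t)) fxx x)
    (hx : HasDerivAt (f t) fx x) :
    besselLaplacian lam f t x = ftt + fxx + 2 * lam / x * fx := by
  unfold besselLaplacian partialT partialX
  rw [← htt.deriv, ← hxx.deriv, ← hx.deriv]

lemma besselLaplacian_add (hf : ContDiffAt ℝ 2 (uncurry f) (t, x))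
    (hg : ContDiffAt ℝ 2 (uncurry g) (t, x)) :
    besselLaplacian lam (fun s y => f s y + g s y) t x
      = besselLaplacian lam f t x + besselLaplacian lam g t x := by
  have htt := hasDerivAt_deriv_of_eventually
    (((hf.eventually_hasDerivAt_partialT one_le_two).and
      (hg.eventually_hasDerivAt_partialT one_le_two)).mono fun _ h => h.1.add h.2)
    (hf.hasDerivAt_partialT_partialT.add hg.hasDerivAt_partialT_partialT)
  have hxx := hasDerivAt_deriv_of_eventually
    (((hf.eventually_hasDerivAt_partialX one_le_two).and
      (hg.eventually_hasDerivAt_partialX one_le_two)).mono fun _ h => h.1.add h.2)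
    (hf.hasDerivAt_partialX_partialX.add hg.hasDerivAt_partialX_partialX)
  have hx := (hf.eventually_hasDerivAt_partialX one_le_two).self_of_nhds.add
    (hg.eventually_hasDerivAt_partialX one_le_two).self_of_nhds
  rw [besselLaplacian_eq_of_hasDerivAt lam htt hxx hx, besselLaplacian, besselLaplacian]
  ring

lemma besselLaplacian_sq (hf : ContDiffAt ℝ 2 (uncurry f) (t, x)) :
    besselLaplacian lam (fun s y => f s y ^ 2) t x
      = 2 * (f t x * besselLaplacian lam f t x + (partialT f t x ^ 2 + partialX f t x ^ 2)) := by
  have hfx := hf.eventually_hasDerivAt_partialX one_le_two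
  rw [besselLaplacian_eq_of_hasDerivAt lam (f := fun s y => f s y ^ 2)
    (hasDerivAt_deriv_sq (hf.eventually_hasDerivAt_partialT one_le_two)
      hf.hasDerivAt_partialT_partialT)
    (hasDerivAt_deriv_sq hfx hf.hasDerivAt_partialX_partialX) (hfx.self_of_nhds.pow 2),
    besselLaplacian]
  push_cast
  ring

lemma besselLaplacian_rpow (q : ℝ) (hf : ContDiffAt ℝ 2 (uncurry f) (t, x)) (hpos : 0 < f t x) :
    besselLaplacian lam (fun s y => f s y ^ q) t x
      = q * f t x ^ (q - 2) * ((q - 1) * (partialT f t x ^ 2 + partialX f t x ^ 2)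
          + f t x * besselLaplacian lam f t x) := by
  have hfx := hf.eventually_hasDerivAt_partialX one_le_two
  rw [besselLaplacian_eq_of_hasDerivAt lam (f := fun s y => f s y ^ q)
    (hasDerivAt_deriv_rpow q (hf.eventually_hasDerivAt_partialT one_le_two)
      hf.hasDerivAt_partialT_partialT hpos)
    (hasDerivAt_deriv_rpow q hfx hf.hasDerivAt_partialX_partialX hpos)
    (hfx.self_of_nhds.rpow_const (Or.inl hpos.ne')), besselLaplacian,
    show q - 1 = q - 2 + 1 by ring, Real.rpow_add_one hpos.ne']
  ring

end BesselLaplacian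

lemma besselLaplacian_rpow_sq_add_sq (lam q : ℝ) {f g : ℝ → ℝ → ℝ} {t x : ℝ}
    (hf : ContDiffAt ℝ 2 (uncurry f) (t, x)) (hg : ContDiffAt ℝ 2 (uncurry g) (t, x))
    (hpos : 0 < f t x ^ 2 + g t x ^ 2) :
    besselLaplacian lam (fun s y => (f s y ^ 2 + g s y ^ 2) ^ q) t x
      = q * (f t x ^ 2 + g t x ^ 2) ^ (q - 2)
        * ((q - 1) * ((2 * (f t x * partialT f t x + g t x * partialT g t x)) ^ 2
            + (2 * (f t x * partialX f t x + g t x * partialX g t x)) ^ 2)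
          + (f t x ^ 2 + g t x ^ 2)
            * (2 * (f t x * besselLaplacian lam f t x + (partialT f t x ^ 2 + partialX f t x ^ 2))
              + 2 * (g t x * besselLaplacian lam g t x
                + (partialT g t x ^ 2 + partialX g t x ^ 2)))) := by
  have hf1 := hf.differentiableAt two_ne_zero
  have hg1 := hg.differentiableAt two_ne_zero
  have hT : partialT (fun s y => f s y ^ 2 + g s y ^ 2) t x
      = 2 * (f t x * partialT f t x + g t x * partialT g t x) :=
    ((hf1.hasDerivAt_partialT.pow 2).add (hg1.hasDerivAt_partialT.pow 2)).deriv.trans (by ring)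
  have hX : partialX (fun s y => f s y ^ 2 + g s y ^ 2) t x
      = 2 * (f t x * partialX f t x + g t x * partialX g t x) :=
    ((hf1.hasDerivAt_partialX.pow 2).add (hg1.hasDerivAt_partialX.pow 2)).deriv.trans (by ring)
  rw [besselLaplacian_rpow lam q (f := fun s y => f s y ^ 2 + g s y ^ 2)
      ((hf.pow 2).add (hg.pow 2)) hpos, hT, hX,
    besselLaplacian_add lam (f := fun s y => f s y ^ 2) (g := fun s y => g s y ^ 2)
      (hf.pow 2) (hg.pow 2), besselLaplacian_sq lam hf, besselLaplacian_sq lam hg]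

section CauchyRiemann

variable {lam : ℝ} {u v : ℝ → ℝ → ℝ} {t x : ℝ}

lemma besselLaplacian_eq_zero_of_cauchyRiemann (hu : ContDiffAt ℝ 2 (uncurry u) (t, x))
    (hv : ContDiffAt ℝ 2 (uncurry v) (t, x))
    (hCR1 : ∀ᶠ z in 𝓝 (t, x), partialX u z.1 z.2 + partialT v z.1 z.2 = 0)
    (hCR2 : ∀ᶠ z in 𝓝 (t, x),
      partialT u z.1 z.2 - partialX v z.1 z.2 = 2 * lam / z.2 * v z.1 z.2) :
    besselLaplacian lam u t x = 0 := by
  have hvT := (hv.uncurry_partialT one_add_one_eq_two.le).differentiableAt one_ne_zero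
  have hvX := (hv.uncurry_partialX one_add_one_eq_two.le).differentiableAt one_ne_zero
  have hxx : partialX (partialX u) t x + partialX (partialT v) t x = 0 :=
    (hu.hasDerivAt_partialX_partialX.add hvT.hasDerivAt_partialX).eq_zero_of_eventually_eq_zero
      hCR1.curry_nhds.self_of_nhds
  have htt : partialT (partialT u) t x - partialT (partialX v) t x
      - 2 * lam / x * partialT v t x = 0 :=
    HasDerivAt.eq_zero_of_eventually_eq_zero
      ((hu.hasDerivAt_partialT_partialT.sub hvX.hasDerivAt_partialT).sub
        ((hv.differentiableAt two_ne_zero).hasDerivAt_partialT.const_mul _))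
      (hCR2.curry_nhds.mono fun _ hs => sub_eq_zero_of_eq hs.self_of_nhds)
  unfold besselLaplacian
  linear_combination htt + hxx - hv.partialX_partialT + 2 * lam / x * hCR1.self_of_nhds

lemma besselLaplacian_eq_of_cauchyRiemann (hx : x ≠ 0) (hu : ContDiffAt ℝ 2 (uncurry u) (t, x))
    (hv : ContDiffAt ℝ 2 (uncurry v) (t, x))
    (hCR1 : ∀ᶠ z in 𝓝 (t, x), partialX u z.1 z.2 + partialT v z.1 z.2 = 0)
    (hCR2 : ∀ᶠ z in 𝓝 (t, x),
      partialT u z.1 z.2 - partialX v z.1 z.2 = 2 * lam / z.2 * v z.1 z.2) :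
    besselLaplacian lam v t x = 2 * lam / x ^ 2 * v t x := by
  have huT := (hu.uncurry_partialT one_add_one_eq_two.le).differentiableAt one_ne_zero
  have huX := (hu.uncurry_partialX one_add_one_eq_two.le).differentiableAt one_ne_zero
  have hcoeff : HasDerivAt (fun w => 2 * lam / w) (-(2 * lam / x ^ 2)) x := by
    simpa [div_eq_mul_inv] using (hasDerivAt_inv hx).const_mul (2 * lam)
  have htt : partialT (partialX u) t x + partialT (partialT v) t x = 0 :=
    (huX.hasDerivAt_partialT.add hv.hasDerivAt_partialT_partialT).eq_zero_of_eventually_eq_zero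
      (hCR1.curry_nhds.mono fun _ hs => hs.self_of_nhds)
  have hxx : partialX (partialT u) t x - partialX (partialX v) t x
      - (-(2 * lam / x ^ 2) * v t x + 2 * lam / x * partialX v t x) = 0 :=
    HasDerivAt.eq_zero_of_eventually_eq_zero
      ((huT.hasDerivAt_partialX.sub hv.hasDerivAt_partialX_partialX).sub
        (hcoeff.mul (hv.differentiableAt two_ne_zero).hasDerivAt_partialX))
      (hCR2.curry_nhds.self_of_nhds.mono fun _ hw => sub_eq_zero_of_eq hw)
  unfold besselLaplacian
  linear_combination htt - hxx + hu.partialX_partialT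

end CauchyRiemann

/-- The bracket of `besselLaplacian_rpow_sq_add_sq` at `q = p / 2`, once `∇u = (a, b)`,
`∇v = (-b, a - (2λ/x) v)`, `Lu = 0` and `Lv = (2λ/x²) v` are substituted. -/
lemma quadratic_nonneg_of_cauchyRiemann {lam p x u v : ℝ} (hlam : 0 < lam) (hx : x ≠ 0)
    (hp : (2 * lam + 1) / (2 * lam + 2) < p) (hpos : 0 < u ^ 2 + v ^ 2) (a b : ℝ) :
    0 ≤ (p / 2 - 1) * ((2 * (u * a - v * b)) ^ 2 + (2 * (u * b + v * (a - 2 * lam / x * v))) ^ 2)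
      + (u ^ 2 + v ^ 2) * (2 * (a ^ 2 + 2 * b ^ 2 + (a - 2 * lam / x * v) ^ 2)
        + 4 * lam / x ^ 2 * v ^ 2) := by
  have hp0 : 0 < p := hp.trans' (by positivity)
  have hκ : 0 < p * (2 * lam + 1) - 2 * lam := by
    rw [div_lt_iff₀ (by positivity)] at hp
    nlinarith
  have hsos : lam * p * (u ^ 2 + v ^ 2) * x ^ 2
      * ((p / 2 - 1) * ((2 * (u * a - v * b)) ^ 2 + (2 * (u * b + v * (a - 2 * lam / x * v))) ^ 2)
        + (u ^ 2 + v ^ 2) * (2 * (a ^ 2 + 2 * b ^ 2 + (a - 2 * lam / x * v) ^ 2)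
          + 4 * lam / x ^ 2 * v ^ 2))
      = 2 * lam * (x * p * (u ^ 2 + v ^ 2) * a - 2 * lam * v * ((p - 1) * v ^ 2 + u ^ 2)) ^ 2
        + 2 * lam * (x * p * (u ^ 2 + v ^ 2) * b - 2 * lam * (p - 2) * u * v ^ 2) ^ 2
        + (p * (2 * lam + 1) - 2 * lam) * (2 * lam * (u ^ 2 + v ^ 2) * v) ^ 2 := by
    field_simp
    ring
  have hc : 0 < lam * p * (u ^ 2 + v ^ 2) * x ^ 2 := by positivity
  refine (mul_nonneg_iff_of_pos_left hc).mp ?_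
  rw [hsos]
  positivity

theorem stmt15_general (lam p : ℝ) (hlam : 0 < lam)
    (hp1 : (2 * lam + 1) / (2 * lam + 2) < p)
    (u v : ℝ → ℝ → ℝ)
    (hu : ContDiffOn ℝ 2 (Function.uncurry u) (Ioi (0 : ℝ) ×ˢ Ioi (0 : ℝ)))
    (hv : ContDiffOn ℝ 2 (Function.uncurry v) (Ioi (0 : ℝ) ×ˢ Ioi (0 : ℝ)))
    (hCR1 : ∀ t x : ℝ, 0 < t → 0 < x →
      deriv (fun x' => u t x') x + deriv (fun t' => v t' x) t = 0)
    (hCR2 : ∀ t x : ℝ, 0 < t → 0 < x →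
      deriv (fun t' => u t' x) t - deriv (fun x' => v t x') x = (2 * lam / x) * v t x) :
    ∀ t x : ℝ, 0 < t → 0 < x → 0 < Real.sqrt ((u t x) ^ 2 + (v t x) ^ 2) →
      0 ≤ deriv (fun s => deriv
              (fun s' => (Real.sqrt ((u s' x) ^ 2 + (v s' x) ^ 2)) ^ p) s) t
          + deriv (fun w => deriv
              (fun w' => (Real.sqrt ((u t w') ^ 2 + (v t w') ^ 2)) ^ p) w) x
          + (2 * lam / x)
            * deriv (fun w => (Real.sqrt ((u t w) ^ 2 + (v t w) ^ 2)) ^ p) x := by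
  intro t x ht hx hF
  have hquadrant : Ioi (0 : ℝ) ×ˢ Ioi (0 : ℝ) ∈ 𝓝 (t, x) :=
    prod_mem_nhds (Ioi_mem_nhds ht) (Ioi_mem_nhds hx)
  have hu2 := hu.contDiffAt hquadrant
  have hv2 := hv.contDiffAt hquadrant
  have hCR1' : ∀ᶠ z in 𝓝 (t, x), partialX u z.1 z.2 + partialT v z.1 z.2 = 0 :=
    Filter.mem_of_superset hquadrant fun z hz => hCR1 z.1 z.2 hz.1 hz.2
  have hCR2' : ∀ᶠ z in 𝓝 (t, x),
      partialT u z.1 z.2 - partialX v z.1 z.2 = 2 * lam / z.2 * v z.1 z.2 :=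
    Filter.mem_of_superset hquadrant fun z hz => hCR2 z.1 z.2 hz.1 hz.2
  have hvt : partialT v t x = -partialX u t x := by linear_combination hCR1'.self_of_nhds
  have hvx : partialX v t x = partialT u t x - 2 * lam / x * v t x := by
    linear_combination -hCR2'.self_of_nhds
  have hsqrt : (fun s y => √(u s y ^ 2 + v s y ^ 2) ^ p)
      = fun s y => (u s y ^ 2 + v s y ^ 2) ^ (p / 2) := by
    ext s y
    rw [Real.rpow_div_two_eq_sqrt p (by positivity)]
  have hpos : 0 < u t x ^ 2 + v t x ^ 2 := Real.sqrt_pos.mp hF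
  change 0 ≤ besselLaplacian lam (fun s y => √(u s y ^ 2 + v s y ^ 2) ^ p) t x
  rw [hsqrt, besselLaplacian_rpow_sq_add_sq lam (p / 2) hu2 hv2 hpos,
    besselLaplacian_eq_zero_of_cauchyRiemann hu2 hv2 hCR1' hCR2',
    besselLaplacian_eq_of_cauchyRiemann hx.ne' hu2 hv2 hCR1' hCR2', hvt, hvx]
  have hp : 0 < p := hp1.trans' (by positivity)
  refine mul_nonneg (by positivity) ?_
  exact (quadratic_nonneg_of_cauchyRiemann hlam hx.ne' hp1 hpos
    (partialT u t x) (partialX u t x)).trans_eq (by ring)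

/-- If `(u,v)` is a `C²` solution of the Bessel Cauchy–Riemann system
`∂_x u + ∂_t v = 0`, `∂_t u − ∂_x v = (2λ/x) v` on `ℝ₊ × ℝ₊`, then for every
`p ∈ ((2λ+1)/(2λ+2), 1)` the function `F = (u² + v²)^{1/2}` satisfies
`∂_t²(F^p) + ∂_x²(F^p) + (2λ/x)∂_x(F^p) ≥ 0` wherever `F > 0`. -/
theorem stmt15 (lam p : ℝ) (hlam : 0 < lam)
    (hp1 : (2 * lam + 1) / (2 * lam + 2) < p) (hp2 : p < 1)
    (u v : ℝ → ℝ → ℝ)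
    (hu : ContDiffOn ℝ 2 (Function.uncurry u) (Ioi (0 : ℝ) ×ˢ Ioi (0 : ℝ)))
    (hv : ContDiffOn ℝ 2 (Function.uncurry v) (Ioi (0 : ℝ) ×ˢ Ioi (0 : ℝ)))
    (hCR1 : ∀ t x : ℝ, 0 < t → 0 < x →
      deriv (fun x' => u t x') x + deriv (fun t' => v t' x) t = 0)
    (hCR2 : ∀ t x : ℝ, 0 < t → 0 < x →
      deriv (fun t' => u t' x) t - deriv (fun x' => v t x') x = (2 * lam / x) * v t x) :
    ∀ t x : ℝ, 0 < t → 0 < x → 0 < Real.sqrt ((u t x) ^ 2 + (v t x) ^ 2) →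
      0 ≤ deriv (fun s => deriv
              (fun s' => (Real.sqrt ((u s' x) ^ 2 + (v s' x) ^ 2)) ^ p) s) t
          + deriv (fun w => deriv
              (fun w' => (Real.sqrt ((u t w') ^ 2 + (v t w') ^ 2)) ^ p) w) x
          + (2 * lam / x)
            * deriv (fun w => (Real.sqrt ((u t w) ^ 2 + (v t w) ^ 2)) ^ p) x :=
  stmt15_general lam p hlam hp1 u v hu hv hCR1 hCR2
end
end
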